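/- arXiv:2508.05046 — 11 statements merged into one kernel-verified Lean document; each statement's English description precedes it below -/
import Mathlib

section
/- Let k ≥ 1 and let Z_1, …, Z_k be independent geometric random variables where Z_i has success parameter p_i ∈ (0,1]. Set p* = min_i p_i and μ = Σ_{i=1}^k 1/p_i. Then for every real T ≥ μ, the probability P(Z_1 + ⋯ + Z_k ≥ T) ≤ exp(−p* · μ · (T/μ − ln(T/μ) − 1)). -/
open MeasureTheory ProbabilityTheory Real Set
open scoped ENNReal

/-! Chernoff's method: for `0 ≤ θ < min pᵢ` a geometric variable of parameter `p` has
`E[(1 - θ)^(-Z)] = p / (p - θ)`, so by independence and Markov's inequality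
`P(∑ Zᵢ ≥ T) ≤ (1 - θ)^T ∏ pᵢ / (pᵢ - θ)`. Take `θ = p* (1 - μ / T)`. Then `(1 - θ)^T ≤ e^(-p* (T - μ))`,
and Bernoulli's inequality `(1 - x)^c ≤ 1 - c x` with `c = p* / pᵢ`, `x = 1 - μ / T` bounds the
`i`-th factor by `(T / μ)^(p* / pᵢ)`, whose product is `(T / μ)^(p* μ)`. -/

lemma inv_one_sub_mul_le_exp_neg_mul_log {c x : ℝ} (hc0 : 0 ≤ c) (hc1 : c ≤ 1) (hx : x < 1) :
    (1 - c * x)⁻¹ ≤ exp (-(c * log (1 - x))) := by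
  have hbernoulli : (1 - x) ^ c ≤ 1 - c * x := by
    simpa [sub_eq_add_neg] using rpow_one_add_le_one_add_mul_self (s := -x) (by linarith) hc0 hc1
  rw [exp_neg, mul_comm c (log (1 - x)), ← rpow_def_of_pos (by linarith)]
  exact inv_anti₀ (rpow_pos_of_pos (by linarith) c) hbernoulli

lemma rpow_mul_prod_div_sub_le_exp {ι : Type*} [Fintype ι] {p : ι → ℝ} {q μ T : ℝ}
    (hq0 : 0 < q) (hq1 : q ≤ 1) (hqp : ∀ i, q ≤ p i) (hμ : μ = ∑ i, 1 / p i) (hμ_pos : 0 < μ)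
    (hT : μ ≤ T) :
    (1 - q * (1 - μ / T)) ^ T * ∏ i, p i / (p i - q * (1 - μ / T)) ≤
      exp (-(q * μ * (T / μ - log (T / μ) - 1))) := by
  have hT_pos : 0 < T := hμ_pos.trans_le hT
  set x := 1 - μ / T with hx
  have hx0 : 0 ≤ x := sub_nonneg.2 ((div_le_one hT_pos).2 hT)
  have hx1 : x < 1 := sub_lt_self 1 (div_pos hμ_pos hT_pos)
  have hqx : q * x < 1 := lt_of_le_of_lt (mul_le_of_le_one_left hx0 hq1) hx1
  have hlog : log (T / μ) = -log (1 - x) := by rw [hx, sub_sub_cancel, ← log_inv, inv_div]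
  have hfirst : (1 - q * x) ^ T ≤ exp (-(q * x * T)) := by
    calc (1 - q * x) ^ T ≤ exp (-(q * x)) ^ T :=
          rpow_le_rpow (by linarith) (by linarith [add_one_le_exp (-(q * x))]) hT_pos.le
      _ = exp (-(q * x * T)) := by rw [← exp_mul, neg_mul]
  have hfactor : ∀ i, p i / (p i - q * x) ≤ exp (q / p i * log (T / μ)) := by
    intro i
    have hpi : 0 < p i := hq0.trans_le (hqp i)
    calc p i / (p i - q * x) = (1 - q / p i * x)⁻¹ := by field_simp
      _ ≤ exp (q / p i * log (T / μ)) := by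
          rw [hlog, mul_neg]
          exact inv_one_sub_mul_le_exp_neg_mul_log (by positivity) ((div_le_one hpi).2 (hqp i)) hx1
  have hfactor_nonneg : ∀ i, 0 ≤ p i / (p i - q * x) := fun i =>
    div_nonneg (hq0.trans_le (hqp i)).le (by nlinarith [hqp i])
  calc (1 - q * x) ^ T * ∏ i, p i / (p i - q * x)
      ≤ exp (-(q * x * T)) * ∏ i, exp (q / p i * log (T / μ)) :=
        mul_le_mul hfirst (Finset.prod_le_prod (fun i _ => hfactor_nonneg i) fun i _ => hfactor i)
          (Finset.prod_nonneg fun i _ => hfactor_nonneg i) (exp_pos _).le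
    _ = exp (-(q * μ * (T / μ - log (T / μ) - 1))) := by
        rw [← exp_sum, ← exp_add]
        congr 1
        simp_rw [div_eq_mul_one_div q (p _), mul_assoc]
        rw [← Finset.mul_sum, ← Finset.sum_mul, ← hμ, hx]
        field_simp
        ring

lemma tsum_ofReal_pow_succ_mul_geometric {p r : ℝ} (hp : p ∈ Ioc 0 1) (hr : 0 ≤ r)
    (hpr : (1 - p) * r < 1) :
    ∑' n : ℕ, ENNReal.ofReal (r ^ (n + 1)) * ENNReal.ofReal (p * (1 - p) ^ n) =
      ENNReal.ofReal (p * r / (1 - (1 - p) * r)) := by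
  have h1p : 0 ≤ 1 - p := sub_nonneg.2 hp.2
  have hterm_nonneg : ∀ n : ℕ, 0 ≤ p * r * ((1 - p) * r) ^ n := fun n =>
    mul_nonneg (mul_nonneg hp.1.le hr) (pow_nonneg (mul_nonneg h1p hr) n)
  have hsum : HasSum (fun n : ℕ => p * r * ((1 - p) * r) ^ n) (p * r / (1 - (1 - p) * r)) :=
    (hasSum_geometric_of_lt_one (mul_nonneg h1p hr) hpr).mul_left (p * r)
  rw [← hsum.tsum_eq, ENNReal.ofReal_tsum_of_nonneg hterm_nonneg hsum.summable]
  refine tsum_congr fun n => ?_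
  rw [← ENNReal.ofReal_mul (pow_nonneg hr _)]
  congr 1
  rw [mul_pow]
  ring

section Probability

variable {Ω : Type*} [MeasurableSpace Ω] {P : Measure Ω}

lemma lintegral_pow_of_geometric [IsProbabilityMeasure P] {X : Ω → ℕ} (hX : Measurable X)
    {p r : ℝ} (hp : p ∈ Ioc 0 1) (hr : 0 ≤ r) (hpr : (1 - p) * r < 1)
    (hgeom : ∀ t : ℕ, 1 ≤ t → P {ω | X ω = t} = ENNReal.ofReal (p * (1 - p) ^ (t - 1))) :
    ∫⁻ ω, ENNReal.ofReal (r ^ X ω) ∂P = ENNReal.ofReal (p * r / (1 - (1 - p) * r)) := by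
  have hlaw : ∀ ρ : ℝ, 0 ≤ ρ → (1 - p) * ρ < 1 →
      ∫⁻ ω, ENNReal.ofReal (ρ ^ X ω) ∂P =
        P {ω | X ω = 0} + ENNReal.ofReal (p * ρ / (1 - (1 - p) * ρ)) := by
    intro ρ hρ hpρ
    have hsingleton : ∀ t : ℕ, P.map X {t} = P {ω | X ω = t} := fun t =>
      Measure.map_apply hX (measurableSet_singleton t)
    rw [← lintegral_map (f := fun n : ℕ => ENNReal.ofReal (ρ ^ n)) measurable_from_top hX,
      lintegral_countable', tsum_eq_zero_add' ENNReal.summable,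
      ← tsum_ofReal_pow_succ_mul_geometric hp hρ hpρ]
    simp only [pow_zero, ENNReal.ofReal_one, one_mul, hsingleton]
    congr 1
    refine tsum_congr fun n => ?_
    rw [hgeom (n + 1) le_add_self, Nat.add_sub_cancel]
  -- `hgeom` leaves the mass at `0` free; the total mass, i.e. `ρ = 1`, forces it to vanish.
  have hzero : P {ω | X ω = 0} = 0 := by
    have h1 := hlaw 1 zero_le_one (by linarith [hp.1])
    simp only [one_pow, ENNReal.ofReal_one, lintegral_const, measure_univ, mul_one,
      sub_sub_cancel, div_self hp.1.ne'] at h1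
    exact (ENNReal.add_left_inj ENNReal.one_ne_top).1 (by rw [zero_add, ← h1])
  rw [hlaw r hr hpr, hzero, zero_add]

lemma measure_le_sum_le_exp_mul_prod_lintegral {ι : Type*} [Fintype ι] {X : ι → Ω → ℝ}
    (hX : ∀ i, Measurable (X i)) (hindep : iIndepFun X P) {s : ℝ} (hs : 0 ≤ s) (T : ℝ) :
    P {ω | T ≤ ∑ i, X i ω} ≤
      ENNReal.ofReal (exp (-(s * T))) * ∏ i, ∫⁻ ω, ENNReal.ofReal (exp (s * X i ω)) ∂P := by
  set Y : ι → Ω → ℝ≥0∞ := fun i ω => ENNReal.ofReal (exp (s * X i ω))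
  have hY : ∀ i, Measurable (Y i) := fun i => by fun_prop
  have hYindep : iIndepFun Y P :=
    hindep.comp (fun _ x => ENNReal.ofReal (exp (s * x))) fun _ => by fun_prop
  have hsub : {ω | T ≤ ∑ i, X i ω} ⊆ {ω | ENNReal.ofReal (exp (s * T)) ≤ ∏ i, Y i ω} := by
    intro ω (hω : T ≤ ∑ i, X i ω)
    change ENNReal.ofReal (exp (s * T)) ≤ ∏ i, ENNReal.ofReal (exp (s * X i ω))
    rw [← ENNReal.ofReal_prod_of_nonneg fun i _ => (exp_pos _).le, ← exp_sum, ← Finset.mul_sum]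
    exact ENNReal.ofReal_le_ofReal (exp_le_exp.2 (mul_le_mul_of_nonneg_left hω hs))
  have hmarkov := mul_meas_ge_le_lintegral₀ (μ := P)
    (Finset.univ.measurable_prod fun i _ => hY i).aemeasurable (ENNReal.ofReal (exp (s * T)))
  rw [lintegral_prod_eq_prod_lintegral_of_indepFun _ _ hYindep hY] at hmarkov
  calc P {ω | T ≤ ∑ i, X i ω}
      = ENNReal.ofReal (exp (-(s * T))) *
          (ENNReal.ofReal (exp (s * T)) * P {ω | T ≤ ∑ i, X i ω}) := by
        rw [← mul_assoc, ← ENNReal.ofReal_mul (exp_pos _).le, ← exp_add, neg_add_cancel, exp_zero,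
          ENNReal.ofReal_one, one_mul]
    _ ≤ _ := by
        gcongr
        exact (mul_le_mul_right (measure_mono hsub) _).trans hmarkov

lemma measure_le_sum_le_of_geometric [IsProbabilityMeasure P] {ι : Type*} [Fintype ι]
    {p : ι → ℝ} (hp : ∀ i, p i ∈ Ioc 0 1) {Z : ι → Ω → ℕ} (hZ : ∀ i, Measurable (Z i))
    (hindep : iIndepFun Z P)
    (hgeom : ∀ i, ∀ t : ℕ, 1 ≤ t →
      P {ω | Z i ω = t} = ENNReal.ofReal (p i * (1 - p i) ^ (t - 1)))
    {θ : ℝ} (hθ0 : 0 ≤ θ) (hθ1 : θ < 1) (hθp : ∀ i, θ < p i) (T : ℝ) :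
    P {ω | T ≤ ∑ i, (Z i ω : ℝ)} ≤ ENNReal.ofReal ((1 - θ) ^ T * ∏ i, p i / (p i - θ)) := by
  have hs : 0 ≤ -log (1 - θ) := neg_nonneg.2 (log_nonpos (by linarith) (by linarith))
  have h1θ : 0 < 1 - θ := sub_pos.2 hθ1
  have hexp_nat : ∀ n : ℕ, exp (-log (1 - θ) * n) = (1 - θ)⁻¹ ^ n := fun n => by
    rw [mul_comm, exp_nat_mul, ← log_inv, exp_log (inv_pos.2 h1θ)]
  have hexp_T : exp (-(-log (1 - θ) * T)) = (1 - θ) ^ T := by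
    rw [neg_mul, neg_neg, rpow_def_of_pos h1θ]
  have hmgf : ∀ i, ∫⁻ ω, ENNReal.ofReal (exp (-log (1 - θ) * Z i ω)) ∂P =
      ENNReal.ofReal (p i / (p i - θ)) := fun i => by
    simp only [hexp_nat]
    rw [lintegral_pow_of_geometric (hZ i) (hp i) (inv_pos.2 h1θ).le ?_ (hgeom i)]
    · have hden : 1 - (1 - p i) * (1 - θ)⁻¹ = (p i - θ) * (1 - θ)⁻¹ := by
        field_simp
        ring
      rw [hden, mul_div_mul_right _ _ (inv_ne_zero h1θ.ne')]
    · rw [mul_inv_lt_iff₀ h1θ, one_mul]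
      linarith [hθp i]
  have hchernoff := measure_le_sum_le_exp_mul_prod_lintegral (X := fun i ω => (Z i ω : ℝ))
    (fun i => measurable_from_top.comp (hZ i))
    (hindep.comp (fun _ n => (n : ℝ)) fun _ => measurable_from_top) hs T
  rw [hexp_T] at hchernoff
  simp only [hmgf] at hchernoff
  rwa [ENNReal.ofReal_mul (rpow_nonneg h1θ.le T),
    ENNReal.ofReal_prod_of_nonneg fun i _ => div_nonneg (hp i).1.le (sub_pos.2 (hθp i)).le]

end Probability

theorem geometric_sum_tail_bound_general
    {Ω : Type*} [MeasurableSpace Ω] (P : Measure Ω) [IsProbabilityMeasure P]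
    (k : ℕ)
    (p : Fin k → ℝ) (hp : ∀ i, p i ∈ Set.Ioc (0 : ℝ) 1)
    (Z : Fin k → Ω → ℕ) (hZmeas : ∀ i, Measurable (Z i))
    (hindep : iIndepFun Z P)
    (hgeom : ∀ i, ∀ t : ℕ, 1 ≤ t →
      P {ω | Z i ω = t} = ENNReal.ofReal (p i * (1 - p i) ^ (t - 1)))
    (pstar : ℝ) (hpstar : IsLeast (Set.range p) pstar)
    (μ : ℝ) (hμ : μ = ∑ i, 1 / p i)
    (T : ℝ) (hT : μ ≤ T) :
    (P {ω | T ≤ ∑ i, (Z i ω : ℝ)}).toReal ≤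
      Real.exp (-(pstar * μ * (T / μ - Real.log (T / μ) - 1))) := by
  obtain ⟨⟨i₀, rfl⟩, hmin⟩ := hpstar
  have hle : ∀ i, p i₀ ≤ p i := fun i => hmin ⟨i, rfl⟩
  have hμ_pos : 0 < μ :=
    hμ ▸ Finset.sum_pos (fun i _ => one_div_pos.2 (hp i).1) ⟨i₀, Finset.mem_univ _⟩
  have hT_pos : 0 < T := hμ_pos.trans_le hT
  have hx0 : 0 ≤ 1 - μ / T := sub_nonneg.2 ((div_le_one hT_pos).2 hT)
  have hθ : p i₀ * (1 - μ / T) < p i₀ :=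
    mul_lt_of_lt_one_right (hp i₀).1 (sub_lt_self 1 (div_pos hμ_pos hT_pos))
  have hbound := measure_le_sum_le_of_geometric hp hZmeas hindep hgeom
    (mul_nonneg (hp i₀).1.le hx0) (hθ.trans_le (hp i₀).2) (fun i => hθ.trans_le (hle i)) T
  exact ENNReal.toReal_le_of_le_ofReal (exp_pos _).le (hbound.trans (ENNReal.ofReal_le_ofReal
    (rpow_mul_prod_div_sub_le_exp (hp i₀).1 (hp i₀).2 hle hμ hμ_pos hT)))

/-- **Chernoff-type tail bound for sums of independent geometric random variables.**
If `Z 1, …, Z k` are jointly independent geometric random variables, with `Z i` having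
success parameter `p i ∈ (0,1]` (so `P(Z i = t) = p i * (1 - p i)^(t-1)` for `t ≥ 1`),
`pstar = min_i p i`, and `μ = ∑ i, 1 / p i`, then for every real `T ≥ μ`,
`P(Z 1 + ⋯ + Z k ≥ T) ≤ exp (-(pstar * μ * (T/μ - ln (T/μ) - 1)))`. -/
theorem geometric_sum_tail_bound
    {Ω : Type*} [MeasurableSpace Ω] (P : Measure Ω) [IsProbabilityMeasure P]
    (k : ℕ) (hk : 1 ≤ k)
    (p : Fin k → ℝ) (hp : ∀ i, p i ∈ Set.Ioc (0 : ℝ) 1)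
    (Z : Fin k → Ω → ℕ) (hZmeas : ∀ i, Measurable (Z i))
    (hindep : iIndepFun Z P)
    (hgeom : ∀ i, ∀ t : ℕ, 1 ≤ t →
      P {ω | Z i ω = t} = ENNReal.ofReal (p i * (1 - p i) ^ (t - 1)))
    (pstar : ℝ) (hpstar : IsLeast (Set.range p) pstar)
    (μ : ℝ) (hμ : μ = ∑ i, 1 / p i)
    (T : ℝ) (hT : μ ≤ T) :
    (P {ω | T ≤ ∑ i, (Z i ω : ℝ)}).toReal ≤
      Real.exp (-(pstar * μ * (T / μ - Real.log (T / μ) - 1))) :=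
  geometric_sum_tail_bound_general P k p hp Z hZmeas hindep hgeom pstar hpstar μ hμ T hT
end

section
/- Let n ≥ 2 be an integer and j a real number such that 2j is a nonnegative integer with n − 2j a positive even integer, and set k = n/2 − j. Let X_1, …, X_k be independent geometric random variables where X_r has success parameter e_{j'_r}(j) with j'_r = n/2 − r + 1. Then for every ε ∈ (0,1) and every real T ≥ 2n·ln(n/ε) − 1, the probability P(X_1 + ⋯ + X_k > T) ≤ ε. -/
/-! Chernoff bound at `t = -log (1 - q)` with `q = 1 / (2n)`. A geometric variable with
parameter `p > q` has moment generating function `p / (p - q)` at `t`. The variable `X r` has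
parameter `e_{j+M}(j)` with `M = k - r + 1`, and `e_{j+M}(j) ≥ (M + 1) q`, so its factor is at
most `(M + 1) / M`; the product telescopes to `k + 1`, which is at most `n - 1/2` unless `n = 2`,
where the single factor is `4/3 ≤ 3/2`. Hence `P(∑ X r ≥ T) ≤ e^{-tT} (n - 1/2)`, and since
`e^t (n - 1/2) = n` and `2nt ≥ 1`, this is at most `ε` once `T ≥ 2n log(n/ε) - 1`. -/

open MeasureTheory ProbabilityTheory

/-- The probability `e_{j'}(j)` that a random SWAP test on `2j'` qubits in the
angular-momentum-`j` sector detects a singlet. -/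
noncomputable def eprob (j' j : ℝ) : ℝ :=
  (j' * (j' + 1) - j * (j + 1)) / (2 * j' * (2 * j' - 1))

theorem eprob_eq (j' j : ℝ) :
    eprob j' j = (j' - j) * (j' + j + 1) / (2 * j' * (2 * j' - 1)) := by
  rw [eprob]
  ring

section eprob

variable {j M : ℝ}

theorem eprob_pos (hj : 0 ≤ j) (hM : 1 ≤ M) : 0 < eprob (j + M) j := by
  rw [eprob_eq]
  apply div_pos <;> nlinarith

theorem eprob_le_one (hj : 0 ≤ j) (hM : 1 ≤ M) : eprob (j + M) j ≤ 1 := by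
  rw [eprob_eq, div_le_one (by nlinarith)]
  nlinarith

theorem add_one_div_le_eprob (hj : 0 ≤ j) (hM : 1 ≤ M) {N : ℝ} (hN : 2 * (j + M) ≤ N) :
    (M + 1) / (2 * N) ≤ eprob (j + M) j := by
  rw [eprob_eq, div_le_div_iff₀ (by linarith) (by nlinarith)]
  have key : (M + 1) * (2 * (j + M) - 1) ≤ 2 * M * (2 * j + M + 1) := by nlinarith
  nlinarith [mul_le_mul_of_nonneg_left hN (by nlinarith : 0 ≤ M * (2 * j + M + 1)),
    mul_le_mul_of_nonneg_left key (by linarith : 0 ≤ 2 * (j + M))]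

theorem one_div_two_mul_lt_eprob (hj : 0 ≤ j) (hM : 1 ≤ M) {N : ℝ} (hN : 2 * (j + M) ≤ N) :
    1 / (2 * N) < eprob (j + M) j :=
  calc 1 / (2 * N) < (M + 1) / (2 * N) := by gcongr <;> linarith
    _ ≤ eprob (j + M) j := add_one_div_le_eprob hj hM hN

theorem eprob_div_sub_le {N : ℝ} (hj : 0 ≤ j) (hM : 1 ≤ M) (hN : 2 * (j + M) ≤ N) :
    eprob (j + M) j / (eprob (j + M) j - 1 / (2 * N)) ≤ (M + 1) / M := by
  have hq : 0 < 1 / (2 * N) := by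
    apply div_pos one_pos
    linarith
  have hp : (M + 1) * (1 / (2 * N)) ≤ eprob (j + M) j := by
    rw [mul_one_div]
    exact add_one_div_le_eprob hj hM hN
  rw [div_le_div_iff₀ (by nlinarith) (by linarith)]
  nlinarith

end eprob

theorem prod_fin_sub_add_one_div (k : ℕ) :
    ∏ i : Fin k, ((k : ℝ) - i + 1) / (k - i) = k + 1 := by
  induction k with
  | zero => simp
  | succ k ih =>
    rw [Fin.prod_univ_succ]
    simp only [Fin.val_zero, Fin.val_succ]
    push_cast
    simp only [add_sub_add_right_eq_sub, ih]
    field_simp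
    ring

theorem Fin.one_le_cast_sub {k : ℕ} (i : Fin k) : (1 : ℝ) ≤ k - i := by
  have : (i : ℝ) + 1 ≤ k := by exact_mod_cast i.isLt
  linarith

theorem prod_eprob_div_sub_le {n : ℕ} (hn : 2 ≤ n) {j : ℝ} (h2j : ∃ m : ℕ, (m : ℝ) = 2 * j)
    {k : ℕ} (hkj : (n : ℝ) - 2 * j = 2 * k) :
    ∏ i : Fin k, eprob (n / 2 - i) j / (eprob (n / 2 - i) j - 1 / (2 * n)) ≤ n - 1 / 2 := by
  obtain ⟨m, hm⟩ := h2j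
  have hj : 0 ≤ j := by linarith [m.cast_nonneg (α := ℝ)]
  have hj' (i : Fin k) : (n : ℝ) / 2 - i = j + (k - i) := by linarith
  by_cases hkn : (k : ℝ) + 1 ≤ n - 1 / 2
  · calc _ ≤ ∏ i : Fin k, ((k : ℝ) - i + 1) / (k - i) := by
          refine Finset.prod_le_prod (fun i _ => ?_) (fun i _ => ?_) <;> rw [hj' i]
          · have hq := one_div_two_mul_lt_eprob hj i.one_le_cast_sub (N := n) (by linarith)
            exact div_nonneg (eprob_pos hj i.one_le_cast_sub).le (by linarith)
          · exact eprob_div_sub_le hj i.one_le_cast_sub (by linarith)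
      _ = k + 1 := prod_fin_sub_add_one_div k
      _ ≤ n - 1 / 2 := hkn
  · -- `k + 1 ≤ n - 1/2` fails only for `n = 2`, `k = 1`, `j = 0`, where `e_1(0) = 1`.
    have hnat : n = m + 2 * k := by exact_mod_cast (by linarith : (n : ℝ) = m + 2 * k)
    have hmk : m + k < 2 := by exact_mod_cast (by linarith : (m : ℝ) + k < 2)
    obtain ⟨rfl, rfl⟩ : m = 0 ∧ k = 1 := by omega
    obtain rfl : j = 0 := by simpa using hm.symm
    subst hnat
    norm_num [eprob]

theorem MeasureTheory.Measure.singleton_zero_add_tsum_singleton_succ (μ : Measure ℕ) :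
    μ {0} + ∑' s, μ {s + 1} = μ Set.univ := by
  rw [← tsum_eq_zero_add' (f := fun s => μ {s}) ENNReal.summable]
  simpa using (lintegral_countable' (μ := μ) fun _ => (1 : ENNReal)).symm

theorem MeasureTheory.Measure.ext_of_singleton_succ {μ ν : Measure ℕ} [IsProbabilityMeasure μ]
    [IsProbabilityMeasure ν] (h : ∀ s, μ {s + 1} = ν {s + 1}) : μ = ν := by
  refine Measure.ext_of_singleton fun s => ?_
  cases s with
  | succ s => exact h s
  | zero =>
    have hμ := μ.singleton_zero_add_tsum_singleton_succ
    have hν := ν.singleton_zero_add_tsum_singleton_succ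
    rw [measure_univ, tsum_congr h] at hμ
    rw [measure_univ, ← hμ] at hν
    have hfin : ∑' s, ν {s + 1} ≠ ⊤ := ne_top_of_le_ne_top ENNReal.one_ne_top (hμ ▸ le_add_self)
    exact ((ENNReal.add_left_inj hfin).1 hν).symm

theorem unitInterval.mk_ne_zero {p : ℝ} (hp : p ∈ Set.Ioc 0 1) :
    (⟨p, Set.Ioc_subset_Icc_self hp⟩ : unitInterval) ≠ 0 :=
  fun h0 => hp.1.ne' (congrArg Subtype.val h0)

theorem one_sub_pow_mul_mul_exp_eq (p t : ℝ) (n : ℕ) :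
    (1 - p) ^ n * p * Real.exp (t * ((n + 1 : ℕ) : ℝ)) =
      p * Real.exp t * (Real.exp t * (1 - p)) ^ n := by
  rw [Nat.cast_succ, mul_add, mul_one, Real.exp_add, mul_comm t, Real.exp_nat_mul, mul_pow]
  ring

theorem exp_mul_one_sub_lt_one {p q t : ℝ} (hqp : q < p) (hp : p ≤ 1)
    (ht : Real.exp (-t) = 1 - q) : Real.exp t * (1 - p) < 1 := by
  rw [← inv_inv (Real.exp t), ← Real.exp_neg, ht, inv_mul_lt_iff₀ (by linarith)]
  linarith

def HasGeometricLaw {Ω : Type*} [MeasurableSpace Ω] (P : Measure Ω) (Y : Ω → ℕ) (p : ℝ) :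
    Prop :=
  ∀ s : ℕ, 1 ≤ s → P {ω | Y ω = s} = ENNReal.ofReal (p * (1 - p) ^ (s - 1))

namespace HasGeometricLaw

variable {Ω : Type*} [MeasurableSpace Ω] {P : Measure Ω} [IsProbabilityMeasure P]
  {Y : Ω → ℕ} {p : ℝ}

theorem map_eq (hY : Measurable Y) (hp : p ∈ Set.Ioc 0 1) (h : HasGeometricLaw P Y p) :
    P.map Y = (geometricMeasure ⟨p, Set.Ioc_subset_Icc_self hp⟩).map Nat.succ := by
  have : IsProbabilityMeasure (P.map Y) := Measure.isProbabilityMeasure_map hY.aemeasurable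
  have : IsProbabilityMeasure ((geometricMeasure ⟨p, Set.Ioc_subset_Icc_self hp⟩).map Nat.succ) :=
    Measure.isProbabilityMeasure_map measurable_from_nat.aemeasurable
  refine Measure.ext_of_singleton_succ fun s => ?_
  rw [Measure.map_apply hY (measurableSet_singleton _),
    Measure.map_apply measurable_from_nat (measurableSet_singleton _),
    show Nat.succ ⁻¹' {s + 1} = {s} by ext; simp,
    geometricMeasure_singleton (unitInterval.mk_ne_zero hp)]
  exact (h (s + 1) (by omega)).trans (by simp [mul_comm])

theorem integrable_exp_mul (hY : Measurable Y) (hp : p ∈ Set.Ioc 0 1) (h : HasGeometricLaw P Y p)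
    {t : ℝ} (ht : Real.exp t * (1 - p) < 1) :
    Integrable (fun ω => Real.exp (t * Y ω)) P := by
  have hr : 0 ≤ Real.exp t * (1 - p) := mul_nonneg (Real.exp_pos t).le (by linarith [hp.2])
  have hlaw : Integrable (fun n : ℕ => Real.exp (t * n)) (P.map Y) := by
    rw [h.map_eq hY hp, integrable_map_measure (by fun_prop) (by fun_prop),
      integrable_geometricMeasure_iff (unitInterval.mk_ne_zero hp)]
    simp only [Function.comp_apply, Real.norm_eq_abs, Real.abs_exp]
    exact ((summable_geometric_of_lt_one hr ht).mul_left (p * Real.exp t)).congr fun n =>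
      (one_sub_pow_mul_mul_exp_eq p t n).symm
  exact (integrable_map_measure (g := fun n : ℕ => Real.exp (t * n)) (by fun_prop)
    hY.aemeasurable).1 hlaw

theorem mgf_eq (hY : Measurable Y) (hp : p ∈ Set.Ioc 0 1) (h : HasGeometricLaw P Y p)
    {t : ℝ} (ht : Real.exp t * (1 - p) < 1) :
    mgf (fun ω => (Y ω : ℝ)) P t = p * Real.exp t / (1 - Real.exp t * (1 - p)) := by
  have hr : 0 ≤ Real.exp t * (1 - p) := mul_nonneg (Real.exp_pos t).le (by linarith [hp.2])
  calc mgf (fun ω => (Y ω : ℝ)) P t = mgf (fun n : ℕ => (n : ℝ)) (P.map Y) t :=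
        (mgf_map hY.aemeasurable (by fun_prop)).symm
    _ = mgf (fun n : ℕ => ((n + 1 : ℕ) : ℝ))
          (geometricMeasure ⟨p, Set.Ioc_subset_Icc_self hp⟩) t := by
        rw [h.map_eq hY hp, mgf_map (by fun_prop) (by fun_prop)]
        rfl
    _ = ∑' n : ℕ, p * Real.exp t * (Real.exp t * (1 - p)) ^ n := by
        rw [mgf, integral_geometricMeasure (unitInterval.mk_ne_zero hp)]
        simp_rw [smul_eq_mul]
        exact tsum_congr (one_sub_pow_mul_mul_exp_eq p t)
    _ = p * Real.exp t / (1 - Real.exp t * (1 - p)) := by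
        rw [tsum_mul_left, tsum_geometric_of_lt_one hr ht, div_eq_mul_inv]

theorem mgf_eq_div_sub (hY : Measurable Y) (hp : p ∈ Set.Ioc 0 1) (h : HasGeometricLaw P Y p)
    {q t : ℝ} (hqp : q < p) (ht : Real.exp (-t) = 1 - q) :
    mgf (fun ω => (Y ω : ℝ)) P t = p / (p - q) := by
  have het : Real.exp t = (1 - q)⁻¹ := by rw [← ht, Real.exp_neg, inv_inv]
  have : 1 - q ≠ 0 := by linarith [hp.2]
  rw [h.mgf_eq hY hp (exp_mul_one_sub_lt_one hqp hp.2 ht), het]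
  field_simp
  ring

end HasGeometricLaw

theorem ProbabilityTheory.iIndepFun.measureReal_sum_ge_le {Ω ι : Type*} [MeasurableSpace Ω]
    {μ : Measure Ω} [IsFiniteMeasure μ] [Fintype ι] {X : ι → Ω → ℝ} (h_indep : iIndepFun X μ)
    (h_meas : ∀ i, Measurable (X i)) {t : ℝ} (ht : 0 ≤ t)
    (h_int : ∀ i, Integrable (fun ω => Real.exp (t * X i ω)) μ) (T : ℝ) :
    μ.real {ω | T ≤ ∑ i, X i ω} ≤ Real.exp (-t * T) * ∏ i, mgf (X i) μ t := by
  rw [← h_indep.mgf_sum h_meas]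
  simpa using measure_ge_le_exp_mul_mgf T ht
    (h_indep.integrable_exp_mul_sum h_meas fun i _ => h_int i)

theorem exp_neg_mul_mul_sub_half_le {n ε t T : ℝ} (hn : 1 ≤ n) (hε : 0 < ε) (hεn : ε ≤ n)
    (ht : Real.exp (-t) = 1 - 1 / (2 * n)) (hT : 2 * n * Real.log (n / ε) - 1 ≤ T) :
    Real.exp (-t * T) * (n - 1 / 2) ≤ ε := by
  set L := Real.log (n / ε)
  have hq : 1 / (2 * n) ≤ t := by linarith [Real.add_one_le_exp (-t)]
  have ht0 : 0 ≤ t := le_trans (by positivity) hq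
  have hnt : 1 ≤ 2 * n * t := by rwa [div_le_iff₀' (by positivity)] at hq
  have hL : 0 ≤ L := Real.log_nonneg ((one_le_div hε).2 hεn)
  have het : Real.exp t * (n - 1 / 2) = n := by
    have : 2 * n - 1 ≠ 0 := by linarith
    rw [← inv_inv (Real.exp t), ← Real.exp_neg, ht]
    field_simp
  calc Real.exp (-t * T) * (n - 1 / 2)
      ≤ Real.exp (-t * (2 * n * L - 1)) * (n - 1 / 2) :=
        mul_le_mul_of_nonneg_right (Real.exp_le_exp.2 (by nlinarith)) (by linarith)
    _ = Real.exp (-(2 * n * t * L)) * (Real.exp t * (n - 1 / 2)) := by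
        rw [← mul_assoc, ← Real.exp_add]
        ring_nf
    _ ≤ Real.exp (-L) * n := by
        rw [het]
        gcongr
        nlinarith
    _ = ε := by
        rw [Real.exp_neg, Real.exp_log (by positivity)]
        field_simp

theorem swap_test_error_probability_general
    {Ω : Type*} [MeasurableSpace Ω] (P : Measure Ω) [IsProbabilityMeasure P]
    (n : ℕ) (hn : 2 ≤ n) (j : ℝ) (h2j : ∃ m : ℕ, (m : ℝ) = 2 * j)
    (k : ℕ) (hkj : (n : ℝ) - 2 * j = 2 * k)
    (X : Fin k → Ω → ℕ) (hXmeas : ∀ i, Measurable (X i))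
    (hindep : iIndepFun X P)
    (hgeom : ∀ i : Fin k, ∀ t : ℕ, 1 ≤ t →
      P {ω | X i ω = t} = ENNReal.ofReal
        (eprob ((n : ℝ) / 2 - i) j * (1 - eprob ((n : ℝ) / 2 - i) j) ^ (t - 1)))
    (ε : ℝ) (hε : ε ∈ Set.Ioo (0 : ℝ) 1)
    (T : ℝ) (hT : 2 * n * Real.log (n / ε) - 1 ≤ T) :
    (P {ω | T < ∑ i, (X i ω : ℝ)}).toReal ≤ ε := by
  have hn' : (2 : ℝ) ≤ n := by exact_mod_cast hn
  have hj : 0 ≤ j := by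
    obtain ⟨m, hm⟩ := h2j
    linarith [m.cast_nonneg (α := ℝ)]
  set q : ℝ := 1 / (2 * n)
  set t := -Real.log (1 - q)
  have hq1 : q < 1 := by rw [div_lt_one (by positivity)]; linarith
  have ht : Real.exp (-t) = 1 - q := by rw [neg_neg, Real.exp_log (by linarith)]
  have ht0 : 0 ≤ t := by linarith [Real.add_one_le_exp (-t), show 0 < q by positivity]
  have hp (i : Fin k) : eprob (n / 2 - i) j ∈ Set.Ioc 0 1 ∧ q < eprob (n / 2 - i) j := by
    rw [show (n : ℝ) / 2 - i = j + (k - i) by linarith]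
    exact ⟨⟨eprob_pos hj i.one_le_cast_sub, eprob_le_one hj i.one_le_cast_sub⟩,
      one_div_two_mul_lt_eprob hj i.one_le_cast_sub (by linarith)⟩
  have hXmeas' (i : Fin k) : Measurable fun ω => (X i ω : ℝ) := by fun_prop
  calc (P {ω | T < ∑ i, (X i ω : ℝ)}).toReal ≤ P.real {ω | T ≤ ∑ i, (X i ω : ℝ)} :=
        measureReal_mono (Set.ofPred_subset_ofPred.2 fun _ => le_of_lt)
    _ ≤ Real.exp (-t * T) * ∏ i, mgf (fun ω => (X i ω : ℝ)) P t :=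
        (hindep.comp (fun _ s => (s : ℝ)) fun _ => measurable_from_nat).measureReal_sum_ge_le
          hXmeas' ht0 (fun i => HasGeometricLaw.integrable_exp_mul (hXmeas i) (hp i).1 (hgeom i)
            (exp_mul_one_sub_lt_one (hp i).2 (hp i).1.2 ht)) T
    _ = Real.exp (-t * T) * ∏ i : Fin k, eprob (n / 2 - i) j / (eprob (n / 2 - i) j - q) := by
        simp_rw [fun i => HasGeometricLaw.mgf_eq_div_sub (hXmeas i) (hp i).1 (hgeom i) (hp i).2 ht]
    _ ≤ Real.exp (-t * T) * (n - 1 / 2) := by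
        gcongr
        exact prod_eprob_div_sub_le hn h2j hkj
    _ ≤ ε := exp_neg_mul_mul_sub_half_le (by linarith) hε.1 (by linarith [hε.2]) ht hT

/-- If `n ≥ 2`, `2j` is a nonnegative integer, `n - 2j = 2k` is a positive even integer,
and `X 1, …, X k` are independent geometric random variables where `X r` has success
parameter `e_{j'_r}(j)` with `j'_r = n/2 - r + 1`, then for every `ε ∈ (0,1)` and every
real `T ≥ 2n·ln(n/ε) - 1`, the probability `P(X 1 + ⋯ + X k > T) ≤ ε`. -/
theorem swap_test_error_probability
    {Ω : Type*} [MeasurableSpace Ω] (P : Measure Ω) [IsProbabilityMeasure P]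
    (n : ℕ) (hn : 2 ≤ n) (j : ℝ) (h2j : ∃ m : ℕ, (m : ℝ) = 2 * j)
    (k : ℕ) (hk : 0 < k) (hkj : (n : ℝ) - 2 * j = 2 * k)
    (X : Fin k → Ω → ℕ) (hXmeas : ∀ i, Measurable (X i))
    (hindep : iIndepFun X P)
    (hgeom : ∀ i : Fin k, ∀ t : ℕ, 1 ≤ t →
      P {ω | X i ω = t} = ENNReal.ofReal
        (eprob ((n : ℝ) / 2 - i) j * (1 - eprob ((n : ℝ) / 2 - i) j) ^ (t - 1)))
    (ε : ℝ) (hε : ε ∈ Set.Ioo (0 : ℝ) 1)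
    (T : ℝ) (hT : 2 * n * Real.log (n / ε) - 1 ≤ T) :
    (P {ω | T < ∑ i, (X i ω : ℝ)}).toReal ≤ ε :=
  swap_test_error_probability_general P n hn j h2j k hkj X hXmeas hindep hgeom ε hε T hT
end

section
/- Let n ≥ 6 be an integer and j a real number such that 2j is a nonnegative integer with n − 2j a positive even integer, and set k = n/2 − j. Let X_1, …, X_k be independent geometric random variables where X_r has success parameter e_{j'_r}(j) with j'_r = n/2 − r + 1. Then for every real T ≥ n·ln(n/2) + n/(ln(n/2) − ln(ln(n/2))), the probability P(X_1 + ⋯ + X_k > T) ≤ n·exp(−T/(2n)). -/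
/-!
Chernoff bound with `z = n/(n-1)`: by independence `P(S > T) ≤ z^(-T) ∏ E[z^(X_i)]`, and a
geometric variable with parameter `p` has `E[z^X] = z p / (1 - z(1-p)) = n p / (n p - 1)`.
Let `a_c = (j+c)(j+c+1) - j(j+1)` (`casimirGap j c`), the numerator of `e_{j+c}(j)`. As
`a_{c+1} - a_c = 2(j+c+1) ≤ n`, we get `n e_{j+c+1}(j) ≥ a_{c+1} / (2(j+c+1) - 1)`, and since
`u ↦ u/(u-1)` decreases, the factor of `j' = j+c+1` is at most `a_{c+1} / (a_c + 1)`. The product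
telescopes to at most `a_k + 1 ≤ n²`, and `z^(-T) ≤ exp(-T/n)`, so the probability is at most
`min(1, x²) ≤ x` where `x = n exp(-T/(2n))`.
-/

open MeasureTheory ProbabilityTheory

open scoped ENNReal

theorem tsum_ofReal_mul_pow {w r : ℝ} (hw : 0 ≤ w) (hr0 : 0 ≤ r) (hr1 : r < 1) :
    ∑' s : ℕ, ENNReal.ofReal (w * r ^ s) = ENNReal.ofReal (w / (1 - r)) := by
  rw [← ENNReal.ofReal_tsum_of_nonneg (fun s => by positivity)
      ((summable_geometric_of_lt_one hr0 hr1).mul_left w),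
    tsum_mul_left, tsum_geometric_of_lt_one hr0 hr1, div_eq_mul_inv]

theorem div_sub_one_le_div_sub_one {u v : ℝ} (hu : 1 < u) (huv : u ≤ v) :
    v / (v - 1) ≤ u / (u - 1) := by
  rw [div_le_div_iff₀ (by linarith) (by linarith)]
  linarith

theorem prod_range_div_add_one_le {a : ℕ → ℝ} (ha : ∀ c, 0 ≤ a c) (k : ℕ) :
    ∏ c ∈ Finset.range k, a (c + 1) / (a c + 1) ≤ a k + 1 := by
  induction k with
  | zero => simp [ha 0]
  | succ k ih =>
    have hk : 0 < a k + 1 := by linarith [ha k]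
    calc ∏ c ∈ Finset.range (k + 1), a (c + 1) / (a c + 1)
        ≤ (a k + 1) * (a (k + 1) / (a k + 1)) := by
          rw [Finset.prod_range_succ]
          exact mul_le_mul_of_nonneg_right ih (div_nonneg (ha _) hk.le)
      _ ≤ a (k + 1) + 1 := by rw [mul_div_cancel₀ _ hk.ne']; linarith

theorem rpow_neg_le_exp_neg {n : ℝ} (hn : 1 < n) {T : ℝ} (hT : 0 ≤ T) :
    (n / (n - 1)) ^ (-T) ≤ Real.exp (-(T / n)) := by
  have hz : 0 < n / (n - 1) := div_pos (by linarith) (by linarith)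
  have hlog : 1 / n ≤ Real.log (n / (n - 1)) := by
    have h := Real.one_sub_inv_le_log_of_pos hz
    rwa [inv_div, one_sub_div (by linarith), sub_sub_cancel] at h
  rw [Real.rpow_def_of_pos hz, Real.exp_le_exp, mul_neg, neg_le_neg_iff,
    div_eq_mul_one_div, mul_comm]
  exact mul_le_mul_of_nonneg_right hlog hT

theorem le_of_le_one_of_le_sq {a x : ℝ} (hx : 0 ≤ x) (h1 : a ≤ 1) (h2 : a ≤ x ^ 2) : a ≤ x := by
  rcases le_total x 1 with hx1 | hx1
  · nlinarith
  · linarith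

theorem two_mul_mul_eprob {j' : ℝ} (j : ℝ) (hj' : j' ≠ 0) :
    2 * j' * eprob j' j = (j' * (j' + 1) - j * (j + 1)) / (2 * j' - 1) := by
  rw [eprob, mul_comm (2 * j') (2 * j' - 1), ← div_div,
    mul_div_cancel₀ _ (mul_ne_zero two_ne_zero hj')]

section CasimirGap

def casimirGap (j : ℝ) (c : ℕ) : ℝ := (j + c) * (j + c + 1) - j * (j + 1)

variable {j : ℝ}

theorem casimirGap_nonneg (c : ℕ) (hj : 0 ≤ j) : 0 ≤ casimirGap j c := by
  unfold casimirGap; nlinarith [(c.cast_nonneg : (0 : ℝ) ≤ c)]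

theorem casimirGap_succ (c : ℕ) :
    casimirGap j (c + 1) = casimirGap j c + 2 * (j + ↑(c + 1)) := by
  unfold casimirGap; push_cast; ring

theorem casimirGap_add_one_le_sq {k : ℕ} (hjk : 1 ≤ j + k) :
    casimirGap j k + 1 ≤ (2 * (j + k)) ^ 2 := by
  unfold casimirGap; nlinarith [sq_nonneg (j + 1 / 2)]

theorem prod_casimirGap_rev_le (hj : 0 ≤ j) (k : ℕ) :
    ∏ i : Fin k, casimirGap j (i.rev + 1) / (casimirGap j i.rev + 1) ≤ casimirGap j k + 1 := by
  calc ∏ i : Fin k, casimirGap j (i.rev + 1) / (casimirGap j i.rev + 1)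
      = ∏ i : Fin k, casimirGap j (i + 1) / (casimirGap j i + 1) :=
        Equiv.prod_comp Fin.revPerm fun i : Fin k => casimirGap j (i + 1) / (casimirGap j i + 1)
    _ = ∏ c ∈ Finset.range k, casimirGap j (c + 1) / (casimirGap j c + 1) :=
        Fin.prod_univ_eq_prod_range (fun c => casimirGap j (c + 1) / (casimirGap j c + 1)) k
    _ ≤ casimirGap j k + 1 := prod_range_div_add_one_le (fun c => casimirGap_nonneg c hj) k

variable (c : ℕ) (hj : 0 ≤ j)
include hj

theorem two_le_two_mul_add_succ : 2 ≤ 2 * (j + ↑(c + 1)) := by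
  push_cast; linarith [(c.cast_nonneg : (0 : ℝ) ≤ c)]

theorem eprob_add_succ_pos : 0 < eprob (j + ↑(c + 1)) j := by
  have hm := two_le_two_mul_add_succ c hj
  have hgap : 0 < casimirGap j (c + 1) := by
    rw [casimirGap_succ]; linarith [casimirGap_nonneg c hj]
  exact div_pos hgap (by nlinarith)

theorem eprob_add_succ_le_one : eprob (j + ↑(c + 1)) j ≤ 1 := by
  have hm := two_le_two_mul_add_succ c hj
  rw [eprob, div_le_one (by nlinarith)]
  push_cast
  nlinarith [(c.cast_nonneg : (0 : ℝ) ≤ c)]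

theorem one_lt_casimirGap_succ_div : 1 < casimirGap j (c + 1) / (2 * (j + ↑(c + 1)) - 1) := by
  have hm := two_le_two_mul_add_succ c hj
  rw [one_lt_div (by linarith), casimirGap_succ]
  linarith [casimirGap_nonneg c hj]

variable {n : ℝ} (hn : 2 * (j + ↑(c + 1)) ≤ n)
include hn

theorem casimirGap_succ_div_le_mul_eprob :
    casimirGap j (c + 1) / (2 * (j + ↑(c + 1)) - 1) ≤ n * eprob (j + ↑(c + 1)) j := by
  have hm := two_le_two_mul_add_succ c hj
  calc casimirGap j (c + 1) / (2 * (j + ↑(c + 1)) - 1)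
      = 2 * (j + ↑(c + 1)) * eprob (j + ↑(c + 1)) j :=
        (two_mul_mul_eprob j (by linarith)).symm
    _ ≤ n * eprob (j + ↑(c + 1)) j :=
        mul_le_mul_of_nonneg_right hn (eprob_add_succ_pos c hj).le

theorem mul_eprob_div_le :
    n * eprob (j + ↑(c + 1)) j / (n * eprob (j + ↑(c + 1)) j - 1) ≤
      casimirGap j (c + 1) / (casimirGap j c + 1) := by
  have hm := two_le_two_mul_add_succ c hj
  refine (div_sub_one_le_div_sub_one (one_lt_casimirGap_succ_div c hj)
    (casimirGap_succ_div_le_mul_eprob c hj hn)).trans_eq ?_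
  rw [div_sub_one (by linarith), div_div_div_cancel_right₀ (by linarith), casimirGap_succ]
  ring_nf

end CasimirGap

section Probability

variable {Ω : Type*} [MeasurableSpace Ω] {P : Measure Ω} {Y : Ω → ℕ}

theorem lintegral_comp_nat_eq_tsum (hY : Measurable Y) (f : ℕ → ℝ≥0∞) :
    ∫⁻ ω, f (Y ω) ∂P = ∑' t, f t * P {ω | Y ω = t} := by
  rw [← lintegral_map (measurable_of_countable f) hY, lintegral_countable']
  refine tsum_congr fun t => ?_
  rw [Measure.map_apply hY (measurableSet_singleton t)]
  rfl

theorem measure_eq_zero_of_geometric [IsProbabilityMeasure P] (hY : Measurable Y) {p : ℝ}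
    (hp0 : 0 < p) (hp1 : p ≤ 1)
    (hgeom : ∀ t : ℕ, 1 ≤ t → P {ω | Y ω = t} = ENNReal.ofReal (p * (1 - p) ^ (t - 1))) :
    P {ω | Y ω = 0} = 0 := by
  have htotal : ∑' t, P {ω | Y ω = t} = 1 := by
    simpa using (lintegral_comp_nat_eq_tsum (P := P) hY 1).symm
  have htail : ∑' s : ℕ, P {ω | Y ω = s + 1} = 1 := by
    simp_rw [hgeom _ (Nat.le_add_left 1 _), Nat.add_sub_cancel]
    rw [tsum_ofReal_mul_pow hp0.le (by linarith) (by linarith), sub_sub_cancel,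
      div_self hp0.ne', ENNReal.ofReal_one]
  rw [tsum_eq_zero_add' ENNReal.summable, htail] at htotal
  exact (ENNReal.add_left_inj ENNReal.one_ne_top).1 (htotal.trans (zero_add 1).symm)

theorem lintegral_pow_of_geometric_s2 [IsProbabilityMeasure P] (hY : Measurable Y) {p : ℝ}
    (hp0 : 0 < p) (hp1 : p ≤ 1)
    (hgeom : ∀ t : ℕ, 1 ≤ t → P {ω | Y ω = t} = ENNReal.ofReal (p * (1 - p) ^ (t - 1)))
    {z : ℝ} (hz : 0 ≤ z) (hzp : z * (1 - p) < 1) :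
    ∫⁻ ω, ENNReal.ofReal z ^ Y ω ∂P = ENNReal.ofReal (z * p / (1 - z * (1 - p))) := by
  rw [lintegral_comp_nat_eq_tsum hY, tsum_eq_zero_add' ENNReal.summable,
    measure_eq_zero_of_geometric hY hp0 hp1 hgeom, mul_zero, zero_add]
  have hterm : ∀ s : ℕ, ENNReal.ofReal z ^ (s + 1) * P {ω | Y ω = s + 1}
      = ENNReal.ofReal (z * p * (z * (1 - p)) ^ s) := by
    intro s
    rw [hgeom _ (Nat.le_add_left 1 _), Nat.add_sub_cancel, ← ENNReal.ofReal_pow hz,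
      ← ENNReal.ofReal_mul (by positivity), mul_pow, pow_succ]
    ring_nf
  rw [tsum_congr hterm, tsum_ofReal_mul_pow (by positivity) (by nlinarith) hzp]

theorem lintegral_pow_le_of_eprob [IsProbabilityMeasure P] (hY : Measurable Y) {j n : ℝ}
    (c : ℕ) (hj : 0 ≤ j) (hn : 2 * (j + ↑(c + 1)) ≤ n)
    (hgeom : ∀ t : ℕ, 1 ≤ t → P {ω | Y ω = t} = ENNReal.ofReal
      (eprob (j + ↑(c + 1)) j * (1 - eprob (j + ↑(c + 1)) j) ^ (t - 1))) :
    ∫⁻ ω, ENNReal.ofReal (n / (n - 1)) ^ Y ω ∂P ≤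
      ENNReal.ofReal (casimirGap j (c + 1) / (casimirGap j c + 1)) := by
  set p := eprob (j + ↑(c + 1)) j
  have hn1 : 1 < n := by linarith [two_le_two_mul_add_succ c hj]
  have hnp : 1 < n * p :=
    (one_lt_casimirGap_succ_div c hj).trans_le (casimirGap_succ_div_le_mul_eprob c hj hn)
  have hzp : n / (n - 1) * (1 - p) < 1 := by
    rw [div_mul_eq_mul_div, div_lt_one (by linarith)]; linarith
  have hpgf : n / (n - 1) * p / (1 - n / (n - 1) * (1 - p)) = n * p / (n * p - 1) := by
    have hn0 : n - 1 ≠ 0 := by linarith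
    have hden : 1 - n / (n - 1) * (1 - p) = (n * p - 1) / (n - 1) := by field_simp; ring
    rw [hden, div_mul_eq_mul_div, div_div_div_cancel_right₀ hn0]
  rw [lintegral_pow_of_geometric_s2 hY (eprob_add_succ_pos c hj) (eprob_add_succ_le_one c hj) hgeom
    (by positivity) hzp, hpgf]
  exact ENNReal.ofReal_le_ofReal (mul_eprob_div_le c hj hn)

theorem measure_lt_le_rpow_neg_mul_lintegral_pow (hY : Measurable Y) {z : ℝ} (hz : 1 ≤ z)
    (T : ℝ) :
    P {ω | T < Y ω} ≤ ENNReal.ofReal (z ^ (-T)) * ∫⁻ ω, ENNReal.ofReal z ^ Y ω ∂P := by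
  have hzT : 0 < z ^ T := Real.rpow_pos_of_pos (by linarith) T
  have hsub : {ω | T < Y ω} ⊆ {ω | ENNReal.ofReal (z ^ T) ≤ ENNReal.ofReal z ^ Y ω} := by
    intro ω hω
    rw [Set.mem_ofPred_eq, ← ENNReal.ofReal_pow (by linarith), ← Real.rpow_natCast]
    exact ENNReal.ofReal_le_ofReal (Real.rpow_le_rpow_of_exponent_le hz hω.le)
  calc P {ω | T < Y ω}
      ≤ (∫⁻ ω, ENNReal.ofReal z ^ Y ω ∂P) / ENNReal.ofReal (z ^ T) :=
        (measure_mono hsub).trans <| meas_ge_le_lintegral_div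
          (measurable_of_countable _ |>.comp hY).aemeasurable
          (ENNReal.ofReal_pos.2 hzT).ne' ENNReal.ofReal_ne_top
    _ = ENNReal.ofReal (z ^ (-T)) * ∫⁻ ω, ENNReal.ofReal z ^ Y ω ∂P := by
        rw [ENNReal.div_eq_inv_mul, Real.rpow_neg (by linarith), ENNReal.ofReal_inv_of_pos hzT]

theorem measure_lt_sum_le_prod_lintegral_pow {ι : Type*} [Fintype ι] {X : ι → Ω → ℕ}
    (hX : ∀ i, Measurable (X i)) (hindep : iIndepFun X P) {z : ℝ} (hz : 1 ≤ z) (T : ℝ) :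
    P {ω | T < ∑ i, (X i ω : ℝ)} ≤
      ENNReal.ofReal (z ^ (-T)) * ∏ i, ∫⁻ ω, ENNReal.ofReal z ^ X i ω ∂P := by
  have hpow : ∀ _ : ι, Measurable fun t : ℕ => ENNReal.ofReal z ^ t :=
    fun _ => measurable_of_countable _
  have hprod := lintegral_prod_eq_prod_lintegral_of_indepFun Finset.univ _
    (hindep.comp _ hpow) fun i => (hpow i).comp (hX i)
  simp only [Function.comp_apply, Finset.prod_pow_eq_pow_sum] at hprod
  rw [← hprod]
  simpa only [← Nat.cast_sum] using
    measure_lt_le_rpow_neg_mul_lintegral_pow (Finset.measurable_sum _ fun i _ => hX i) hz T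

theorem measure_lt_sum_le_of_eprob [IsProbabilityMeasure P] {k : ℕ} {X : Fin k → Ω → ℕ}
    (hX : ∀ i, Measurable (X i)) (hindep : iIndepFun X P) {j n : ℝ} (hj : 0 ≤ j) (hn1 : 1 < n)
    (hn : 2 * (j + k) ≤ n)
    (hgeom : ∀ i : Fin k, ∀ t : ℕ, 1 ≤ t → P {ω | X i ω = t} = ENNReal.ofReal
      (eprob (j + ↑(i.rev + 1 : ℕ)) j * (1 - eprob (j + ↑(i.rev + 1 : ℕ)) j) ^ (t - 1)))
    (T : ℝ) :
    P {ω | T < ∑ i, (X i ω : ℝ)} ≤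
      ENNReal.ofReal ((n / (n - 1)) ^ (-T) * (casimirGap j k + 1)) := by
  have hz : 1 ≤ n / (n - 1) := by rw [le_div_iff₀ (by linarith)]; linarith
  have hfactor_nonneg : ∀ i : Fin k,
      0 ≤ casimirGap j (i.rev + 1) / (casimirGap j i.rev + 1) := fun i =>
    div_nonneg (casimirGap_nonneg _ hj) (by linarith [casimirGap_nonneg i.rev hj])
  calc P {ω | T < ∑ i, (X i ω : ℝ)}
      ≤ ENNReal.ofReal ((n / (n - 1)) ^ (-T)) *
          ∏ i, ∫⁻ ω, ENNReal.ofReal (n / (n - 1)) ^ X i ω ∂P :=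
        measure_lt_sum_le_prod_lintegral_pow hX hindep hz T
    _ ≤ ENNReal.ofReal ((n / (n - 1)) ^ (-T)) *
          ∏ i : Fin k, ENNReal.ofReal (casimirGap j (i.rev + 1) / (casimirGap j i.rev + 1)) := by
        gcongr with i
        have hi : 2 * (j + ↑(i.rev + 1 : ℕ)) ≤ n := by
          have : (i.rev : ℕ) + 1 ≤ k := i.rev.isLt
          have : ((i.rev + 1 : ℕ) : ℝ) ≤ k := by exact_mod_cast this
          linarith
        exact lintegral_pow_le_of_eprob (hX i) i.rev hj hi (hgeom i)
    _ ≤ ENNReal.ofReal ((n / (n - 1)) ^ (-T) * (casimirGap j k + 1)) := by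
        rw [← ENNReal.ofReal_prod_of_nonneg fun i _ => hfactor_nonneg i,
          ← ENNReal.ofReal_mul (by positivity)]
        exact ENNReal.ofReal_le_ofReal (mul_le_mul_of_nonneg_left
          (prod_casimirGap_rev_le hj k) (by positivity))

end Probability

theorem swap_test_error_exponential_decay_general
    {Ω : Type*} [MeasurableSpace Ω] (P : Measure Ω) [IsProbabilityMeasure P]
    (n : ℕ) (hn : 6 ≤ n) (j : ℝ) (h2j : ∃ m : ℕ, (m : ℝ) = 2 * j)
    (k : ℕ) (hkj : (n : ℝ) - 2 * j = 2 * k)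
    (X : Fin k → Ω → ℕ) (hXmeas : ∀ i, Measurable (X i))
    (hindep : iIndepFun X P)
    (hgeom : ∀ i : Fin k, ∀ t : ℕ, 1 ≤ t →
      P {ω | X i ω = t} = ENNReal.ofReal
        (eprob ((n : ℝ) / 2 - i) j * (1 - eprob ((n : ℝ) / 2 - i) j) ^ (t - 1)))
    (T : ℝ) :
    (P {ω | T < ∑ i, (X i ω : ℝ)}).toReal ≤ n * Real.exp (-(T / (2 * n))) := by
  obtain ⟨m, hm⟩ := h2j
  have hj : 0 ≤ j := by linarith [m.cast_nonneg (α := ℝ)]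
  have hn6 : (6 : ℝ) ≤ n := by exact_mod_cast hn
  have hprob : (P {ω | T < ∑ i, (X i ω : ℝ)}).toReal ≤ 1 :=
    ENNReal.toReal_le_of_le_ofReal zero_le_one (ENNReal.ofReal_one ▸ prob_le_one)
  rcases lt_or_ge T 0 with hT | hT
  · have : 1 ≤ Real.exp (-(T / (2 * n))) :=
      Real.one_le_exp (neg_nonneg.2 (div_nonpos_of_nonpos_of_nonneg hT.le (by positivity)))
    nlinarith
  have hrev : ∀ i : Fin k, (n : ℝ) / 2 - i = j + ↑(i.rev + 1 : ℕ) := fun i => by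
    have h : (i.rev : ℕ) + 1 + i = k := by rw [Fin.val_rev]; omega
    have h' : ((i.rev + 1 : ℕ) : ℝ) + i = k := by exact_mod_cast h
    linarith
  refine le_of_le_one_of_le_sq (by positivity) hprob
    (ENNReal.toReal_le_of_le_ofReal (by positivity) ?_)
  refine (measure_lt_sum_le_of_eprob (n := n) hXmeas hindep hj (by linarith) (by linarith)
    (fun i t ht => by rw [hgeom i t ht, hrev]) T).trans (ENNReal.ofReal_le_ofReal ?_)
  calc ((n : ℝ) / (n - 1)) ^ (-T) * (casimirGap j k + 1)
      ≤ Real.exp (-(T / n)) * (2 * (j + k)) ^ 2 :=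
        mul_le_mul (rpow_neg_le_exp_neg (by linarith) hT)
          (casimirGap_add_one_le_sq (by linarith)) (by linarith [casimirGap_nonneg k hj])
          (Real.exp_pos _).le
    _ = (n * Real.exp (-(T / (2 * n)))) ^ 2 := by
        rw [show 2 * (j + k) = (n : ℝ) by linarith, mul_pow, ← Real.exp_nat_mul]
        push_cast
        ring_nf

/-- If `n ≥ 6`, `2j` is a nonnegative integer, `n - 2j = 2k` is a positive even integer,
and `X 1, …, X k` are independent geometric random variables where `X r` has success
parameter `e_{j'_r}(j)` with `j'_r = n/2 - r + 1`, then for every real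
`T ≥ n·ln(n/2) + n/(ln(n/2) - ln(ln(n/2)))`, one has
`P(X 1 + ⋯ + X k > T) ≤ n·exp(-T/(2n))`. -/
theorem swap_test_error_exponential_decay
    {Ω : Type*} [MeasurableSpace Ω] (P : Measure Ω) [IsProbabilityMeasure P]
    (n : ℕ) (hn : 6 ≤ n) (j : ℝ) (h2j : ∃ m : ℕ, (m : ℝ) = 2 * j)
    (k : ℕ) (hk : 0 < k) (hkj : (n : ℝ) - 2 * j = 2 * k)
    (X : Fin k → Ω → ℕ) (hXmeas : ∀ i, Measurable (X i))
    (hindep : iIndepFun X P)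
    (hgeom : ∀ i : Fin k, ∀ t : ℕ, 1 ≤ t →
      P {ω | X i ω = t} = ENNReal.ofReal
        (eprob ((n : ℝ) / 2 - i) j * (1 - eprob ((n : ℝ) / 2 - i) j) ^ (t - 1)))
    (T : ℝ)
    (hT : n * Real.log (n / 2) + n / (Real.log (n / 2) - Real.log (Real.log (n / 2))) ≤ T) :
    (P {ω | T < ∑ i, (X i ω : ℝ)}).toReal ≤ n * Real.exp (-(T / (2 * n))) :=
  swap_test_error_exponential_decay_general P n hn j h2j k hkj X hXmeas hindep hgeom T
end

section
/- Let n be a positive integer and j a real number such that 2j is a nonnegative integer with n − 2j a positive even integer (so 0 ≤ j ≤ n/2 − 1). Then T_*(j) ≤ 2(n − j) + (2j − 2)·ln(n/2 − j). -/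
lemma eprob_term_bound (j : ℝ) (hj : 0 ≤ j) (r : ℕ) :
    1 / eprob (j + (r + 1)) j ≤ 4 + (2 * j - 2) / (r + 1) := by
  set s : ℝ := (r : ℝ) + 1 with hs
  have hs1 : (1 : ℝ) ≤ s := by
    have := Nat.cast_nonneg (α := ℝ) r; linarith
  have h1 : eprob (j + s) j = (s * (2 * j + s + 1)) / (2 * (j + s) * (2 * (j + s) - 1)) := by
    unfold eprob; ring_nf
  have hden : 0 < 2 * (j + s) * (2 * (j + s) - 1) := by nlinarith
  have hnum : 0 < s * (2 * j + s + 1) := by nlinarith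
  have hkey : (4 + (2 * j - 2) / s) * (s * (2 * j + s + 1)) =
      (4 * s + 2 * j - 2) * (2 * j + s + 1) := by
    field_simp
    ring
  rw [h1, one_div, inv_div, div_le_iff₀ hnum, hkey]
  nlinarith [mul_nonneg hj (sub_nonneg.2 hs1)]

lemma sum_inv_le (k : ℕ) : ∑ r ∈ Finset.range k, (1 : ℝ) / (r + 1) = (harmonic k : ℝ) := by
  rw [harmonic, Rat.cast_sum]
  refine Finset.sum_congr rfl fun i _ => ?_
  push_cast
  rw [one_div]

/-- **Upper bound on the mean number of SWAP tests.** If `n` is a positive integer and `j`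
a real number with `2j` a nonnegative integer and `n - 2j = 2k` a positive even integer,
then `T_*(j) = ∑_{j'=j+1}^{n/2} 1/e_{j'}(j) ≤ 2(n - j) + (2j - 2)·ln(n/2 - j)`. -/
theorem mean_swap_tests_upper_bound
    (n : ℕ) (hn : 0 < n) (j : ℝ) (h2j : ∃ m : ℕ, (m : ℝ) = 2 * j)
    (k : ℕ) (hk : 0 < k) (hkj : (n : ℝ) - 2 * j = 2 * k) :
    ∑ r ∈ Finset.range k, 1 / eprob (j + (r + 1)) j ≤
      2 * ((n : ℝ) - j) + (2 * j - 2) * Real.log ((n : ℝ) / 2 - j) := by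
  obtain ⟨m, hm⟩ := h2j
  have hj : 0 ≤ j := by nlinarith [Nat.cast_nonneg (α := ℝ) m]
  have hlogk : (n : ℝ) / 2 - j = k := by linarith
  rw [hlogk]
  have hsum : ∑ r ∈ Finset.range k, 1 / eprob (j + (r + 1)) j ≤
      4 * k + (2 * j - 2) * (harmonic k : ℝ) := by
    calc ∑ r ∈ Finset.range k, 1 / eprob (j + (r + 1)) j
        ≤ ∑ r ∈ Finset.range k, (4 + (2 * j - 2) / ((r : ℝ) + 1)) :=
          Finset.sum_le_sum fun r _ => eprob_term_bound j hj r
      _ = 4 * k + (2 * j - 2) * ∑ r ∈ Finset.range k, (1 : ℝ) / (r + 1) := by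
          simp_rw [div_eq_mul_one_div (2 * j - 2)]
          rw [Finset.sum_add_distrib, Finset.sum_const, Finset.card_range, ← Finset.mul_sum,
            nsmul_eq_mul, mul_comm (k : ℝ) 4]
      _ = 4 * k + (2 * j - 2) * (harmonic k : ℝ) := by rw [sum_inv_le]
  have hn2k : 2 * ((n : ℝ) - j) = 4 * k + 2 * j := by linarith
  rw [hn2k]
  rcases le_or_gt 2 (2 * j) with hcase | hcase
  · have hH : (harmonic k : ℝ) ≤ 1 + Real.log k := harmonic_le_one_add_log k
    nlinarith [mul_le_mul_of_nonneg_left hH (by linarith : (0:ℝ) ≤ 2 * j - 2)]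
  · have hlog : Real.log k ≤ Real.log (k + 1) := by
      apply Real.log_le_log (by exact_mod_cast hk)
      linarith
    have hH : Real.log ((k : ℝ) + 1) ≤ (harmonic k : ℝ) := by
      have := log_add_one_le_harmonic k
      push_cast at this ⊢
      convert this using 2
    have h2 : Real.log k ≤ (harmonic k : ℝ) := hlog.trans hH
    nlinarith [mul_le_mul_of_nonneg_left h2 (by linarith : (0:ℝ) ≤ 2 - 2 * j)]
end

section
/- Let n be a positive integer and j a real number such that 2j is an integer with 2j ≥ 2, n − 2j is a positive even integer (so 1 ≤ j ≤ n/2 − 1). Then T_*(j) ≥ 2n − 4j + (2j − 2)·ln(n/2 − j) − (2j + 4)·ln((n/2 + j + 1)/(2j + 1)). -/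
/-!
Writing `j' = j + c`, the summand is the rational function
`1 / e_{j+c}(j) = 4 + (2j - 2)/c - (2j + 4)/(2j + c + 1) + 2/(c (2j + c + 1))`.
Dropping the last (positive) term and bounding `1/c ≥ log (c + 1) - log c` and
`1/(2j + c + 1) ≤ log (2j + c + 1) - log (2j + c)`, the sum over `c = 1, …, k = n/2 - j`
telescopes to `4k + (2j - 2) log (k + 1) - (2j + 4) log ((2j + k + 1)/(2j + 1))`,
and `4k = 2n - 4j`, `log (k + 1) ≥ log k`.
-/

open Finset Real

namespace Real

lemma log_add_one_sub_log_le_inv {c : ℝ} (hc : 0 < c) : log (c + 1) - log c ≤ c⁻¹ := by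
  have h := log_le_sub_one_of_pos (show 0 < (c + 1) / c by positivity)
  rw [log_div (by linarith) hc.ne', add_div, div_self hc.ne', one_div] at h
  linarith

lemma inv_add_one_le_log_add_one_sub_log {c : ℝ} (hc : 0 < c) :
    (c + 1)⁻¹ ≤ log (c + 1) - log c := by
  have h := one_sub_inv_le_log_of_pos (show 0 < (c + 1) / c by positivity)
  have hinv : 1 - ((c + 1) / c)⁻¹ = (c + 1)⁻¹ := by field_simp; ring
  rwa [log_div (by linarith) hc.ne', hinv] at h

lemma sum_range_log_add_one_sub_log (a : ℝ) (k : ℕ) :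
    ∑ r ∈ range k, (log (a + r + 1) - log (a + r)) = log (a + k) - log a := by
  simpa [add_assoc] using sum_range_sub (fun i : ℕ => log (a + i)) k

end Real

lemma one_div_eprob_add (j c : ℝ) :
    1 / eprob (j + c) j = 2 * (j + c) * (2 * (j + c) - 1) / (c * (2 * j + c + 1)) := by
  rw [eprob, one_div_div]
  ring_nf

lemma partial_fractions_le_one_div_eprob_add {j c : ℝ} (hj : 0 ≤ j) (hc : 0 < c) :
    4 + (2 * j - 2) * c⁻¹ - (2 * j + 4) * (2 * j + c + 1)⁻¹ ≤ 1 / eprob (j + c) j := by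
  have hden : 0 < c * (2 * j + c + 1) := by positivity
  have hpf : 4 + (2 * j - 2) * c⁻¹ - (2 * j + 4) * (2 * j + c + 1)⁻¹
      = (2 * (j + c) * (2 * (j + c) - 1) - 2) / (c * (2 * j + c + 1)) := by
    field_simp
    ring
  rw [hpf, one_div_eprob_add]
  gcongr
  linarith

lemma log_bound_le_one_div_eprob_add {j c : ℝ} (hj : 1 ≤ j) (hc : 0 < c) :
    4 + (2 * j - 2) * (log (c + 1) - log c)
        - (2 * j + 4) * (log (2 * j + c + 1) - log (2 * j + c)) ≤ 1 / eprob (j + c) j := by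
  have h₁ := mul_le_mul_of_nonneg_left (log_add_one_sub_log_le_inv hc)
    (show 0 ≤ 2 * j - 2 by linarith)
  have h₂ := mul_le_mul_of_nonneg_left
    (inv_add_one_le_log_add_one_sub_log (show 0 < 2 * j + c by linarith))
    (show 0 ≤ 2 * j + 4 by linarith)
  have h₃ := partial_fractions_le_one_div_eprob_add (show 0 ≤ j by linarith) hc
  linarith

theorem mean_swap_tests_lower_bound_general
    (n : ℕ) (j : ℝ) (hj : 2 ≤ 2 * j)
    (k : ℕ) (hk : 0 < k) (hkj : (n : ℝ) - 2 * j = 2 * k) :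
    2 * (n : ℝ) - 4 * j + (2 * j - 2) * Real.log ((n : ℝ) / 2 - j)
        - (2 * j + 4) * Real.log (((n : ℝ) / 2 + j + 1) / (2 * j + 1)) ≤
      ∑ r ∈ Finset.range k, 1 / eprob (j + (r + 1)) j := by
  have hk₁ : (1 : ℝ) ≤ k := by exact_mod_cast hk
  have hn : (n : ℝ) = 2 * j + 2 * k := by linarith
  rw [show (n : ℝ) / 2 - j = k by rw [hn]; ring,
    show ((n : ℝ) / 2 + j + 1) / (2 * j + 1) = (2 * j + 1 + k) / (2 * j + 1) by rw [hn]; ring,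
    log_div (by linarith) (by linarith)]
  calc _ ≤ 4 * k + (2 * j - 2) * (log (1 + k) - log 1)
          - (2 * j + 4) * (log (2 * j + 1 + k) - log (2 * j + 1)) := by
        have hlog : (2 * j - 2) * log k ≤ (2 * j - 2) * log (1 + k) :=
          mul_le_mul_of_nonneg_left (log_le_log (by linarith) (by linarith)) (by linarith)
        rw [log_one, hn]
        linarith
    _ = ∑ r ∈ range k, (4 + (2 * j - 2) * (log (1 + r + 1) - log (1 + r))
          - (2 * j + 4) * (log (2 * j + 1 + r + 1) - log (2 * j + 1 + r))) := by
        rw [sum_sub_distrib, sum_add_distrib, ← mul_sum, ← mul_sum,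
          sum_range_log_add_one_sub_log, sum_range_log_add_one_sub_log]
        simp [mul_comm]
    _ ≤ _ := sum_le_sum fun r _ => by
        have := log_bound_le_one_div_eprob_add (j := j) (c := (r : ℝ) + 1) (by linarith)
          (by positivity)
        ring_nf at this ⊢
        exact this

/-- **Lower bound on the mean number of SWAP tests.** If `n` is a positive integer and `j`
a real number with `2j` an integer, `2j ≥ 2`, and `n - 2j = 2k` a positive even integer,
then `T_*(j) = ∑_{j'=j+1}^{n/2} 1/e_{j'}(j)
  ≥ 2n - 4j + (2j - 2)·ln(n/2 - j) - (2j + 4)·ln((n/2 + j + 1)/(2j + 1))`. -/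
theorem mean_swap_tests_lower_bound
    (n : ℕ) (hn : 0 < n) (j : ℝ) (h2j : ∃ m : ℕ, (m : ℝ) = 2 * j) (hj : 2 ≤ 2 * j)
    (k : ℕ) (hk : 0 < k) (hkj : (n : ℝ) - 2 * j = 2 * k) :
    2 * (n : ℝ) - 4 * j + (2 * j - 2) * Real.log ((n : ℝ) / 2 - j)
        - (2 * j + 4) * Real.log (((n : ℝ) / 2 + j + 1) / (2 * j + 1)) ≤
      ∑ r ∈ Finset.range k, 1 / eprob (j + (r + 1)) j :=
  mean_swap_tests_lower_bound_general n j hj k hk hkj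
end

section
/- Let n be a positive integer and j a real number such that 2j is a nonnegative integer with n − 2j a positive even integer (so 0 ≤ j ≤ n/2 − 1). Then 2j + (2j + 4)·ln((n/2 + j + 1)/(2j + 1)) ≤ n + 5. -/
/-- Auxiliary: for positive `x`, `log x ≤ log 2 + x/2 - 1`. -/
lemma log_le_log_two_add (x : ℝ) (hx : 0 < x) :
    Real.log x ≤ Real.log 2 + x / 2 - 1 := by
  have h1 : Real.log (x / 2) ≤ x / 2 - 1 := by
    have := Real.log_le_sub_one_of_pos (x := x / 2) (by linarith)
    linarith
  have h2 : Real.log x = Real.log 2 + Real.log (x / 2) := by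
    rw [Real.log_div (ne_of_gt hx) (by norm_num)]; ring
  linarith

/-- **Bound on the gap between the upper and lower bounds on `T_*(j)`.** If `n` is a
positive integer and `j` a real number with `2j` a nonnegative integer and `n - 2j = 2k`
a positive even integer, then `2j + (2j + 4)·ln((n/2 + j + 1)/(2j + 1)) ≤ n + 5`. -/
theorem gap_bound
    (n : ℕ) (hn : 0 < n) (j : ℝ) (h2j : ∃ m : ℕ, (m : ℝ) = 2 * j)
    (k : ℕ) (hk : 0 < k) (hkj : (n : ℝ) - 2 * j = 2 * k) :
    2 * j + (2 * j + 4) * Real.log (((n : ℝ) / 2 + j + 1) / (2 * j + 1)) ≤ (n : ℝ) + 5 := by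
  obtain ⟨m, hm⟩ := h2j
  have hk1 : (1:ℝ) ≤ k := by exact_mod_cast hk
  have hj0 : 0 ≤ j := by
    have : (0:ℝ) ≤ (m:ℝ) := Nat.cast_nonneg m
    linarith
  have ha : (0:ℝ) < 2 * j + 1 := by linarith
  have hnval : (n:ℝ) = 2 * j + 2 * k := by linarith
  rw [hnval]
  have harg : ((2*j + 2*(k:ℝ))/2 + j + 1)/(2*j+1) = 1 + (k:ℝ)/(2*j+1) := by
    field_simp; ring
  rw [harg]
  have hx : (0:ℝ) < 1 + (k:ℝ)/(2*j+1) := by positivity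
  suffices h : (2*j+4) * Real.log (1 + (k:ℝ)/(2*j+1)) ≤ 2*k+5 by linarith
  rcases m with _ | _ | m
  · -- m = 0, j = 0
    have hj : j = 0 := by simpa using hm.symm
    subst hj
    have hl2 : Real.log 2 < 0.6931471808 := Real.log_two_lt_d9
    have := log_le_log_two_add (1 + (k:ℝ)/(2*0+1)) hx
    nlinarith
  · -- m = 1, j = 1/2
    have hj : j = 1/2 := by
      have : ((0:ℕ)+1:ℝ) = 2 * j := by exact_mod_cast hm
      push_cast at this
      linarith
    subst hj
    have hl2 : Real.log 2 < 0.6931471808 := Real.log_two_lt_d9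
    have := log_le_log_two_add (1 + (k:ℝ)/(2*(1/2)+1)) hx
    nlinarith
  · -- m ≥ 2, j ≥ 1
    have hj1 : (1:ℝ) ≤ j := by
      have : ((m + 2 : ℕ) : ℝ) = 2 * j := hm
      push_cast at this
      have hm0 : (0:ℝ) ≤ (m:ℝ) := Nat.cast_nonneg m
      linarith
    have hlog : Real.log (1 + (k:ℝ)/(2*j+1)) ≤ (k:ℝ)/(2*j+1) := by
      have := Real.log_le_sub_one_of_pos hx
      linarith
    have hdiv : (2*j+4) * ((k:ℝ)/(2*j+1)) ≤ 2*k+5 := by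
      rw [← mul_div_assoc, div_le_iff₀ ha]
      nlinarith
    have hpos : (0:ℝ) ≤ 2*j+4 := by linarith
    calc (2*j+4) * Real.log (1 + (k:ℝ)/(2*j+1))
        ≤ (2*j+4) * ((k:ℝ)/(2*j+1)) := by
          exact mul_le_mul_of_nonneg_left hlog hpos
      _ ≤ 2*k+5 := hdiv
end

section
/- Let n ≥ 3 be an integer. Then for every real number j with 2j a nonnegative integer, n − 2j a nonnegative even integer, and j ≤ n/2 − 1, one has T_*(j) ≤ n·ln(n/2) + n/(ln(n/2) − ln(ln(n/2))). -/
open Real Finset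

noncomputable def swapBound (N : ℝ) : ℝ :=
  N * log (N / 2) + N / (log (N / 2) - log (log (N / 2)))

lemma one_div_eprob_add_le {j R : ℝ} (hj : 0 ≤ j) (hR : 0 < R) :
    1 / eprob (j + R) j ≤ 4 + 2 * j / R := by
  have hden : 0 < R * (2 * j + R + 1) := by positivity
  have he : eprob (j + R) j = R * (2 * j + R + 1) / ((2 * j + 2 * R) * (2 * j + 2 * R - 1)) := by
    unfold eprob; ring_nf
  have hrhs : (4 + 2 * j / R) * (R * (2 * j + R + 1)) = (4 * R + 2 * j) * (2 * j + R + 1) := by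
    field_simp
  rw [he, one_div_div, div_le_iff₀ hden, hrhs]
  nlinarith [mul_nonneg hj hR.le]

lemma sum_one_div_eprob_le {j : ℝ} (hj : 0 ≤ j) (k : ℕ) :
    ∑ r ∈ range k, 1 / eprob (j + (r + 1)) j ≤ 4 * k + 2 * j * (1 + log k) := by
  have harmonic_le : ∑ r ∈ range k, 1 / ((r : ℝ) + 1) ≤ 1 + log k := by
    simpa [harmonic, one_div] using harmonic_le_one_add_log k
  calc ∑ r ∈ range k, 1 / eprob (j + (r + 1)) j
      ≤ ∑ r ∈ range k, (4 + 2 * j * (1 / ((r : ℝ) + 1))) :=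
        sum_le_sum fun r _ => by
          simpa only [mul_one_div] using one_div_eprob_add_le hj (Nat.cast_add_one_pos r)
    _ = 4 * k + 2 * j * ∑ r ∈ range k, 1 / ((r : ℝ) + 1) := by
        rw [sum_add_distrib, ← mul_sum]; simp [mul_comm]
    _ ≤ 4 * k + 2 * j * (1 + log k) := by gcongr

lemma log_le_log_add_div_sub_one {x c : ℝ} (hx : 0 < x) (hc : 0 < c) :
    log x ≤ log c + x / c - 1 := by
  have := log_le_sub_one_of_pos (div_pos hx hc)
  rw [log_div hx.ne' hc.ne'] at this
  linarith

lemma four_mul_add_mul_one_add_log_le_swapBound {N K : ℝ} (hL : 1 ≤ log (N / 2)) (hK : 0 < K)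
    (hKN : 2 * K ≤ N) : 4 * K + (N - 2 * K) * (1 + log K) ≤ swapBound N := by
  have hN : 0 < N := by linarith
  unfold swapBound
  set L := log (N / 2) with hLdef
  set a := log L
  set M := L - a with hMdef
  set b := log M
  have ha : 0 ≤ a := log_nonneg hL
  have hM : 1 ≤ M := by linarith [log_le_sub_one_of_pos (by linarith : 0 < L)]
  have hb : 0 ≤ b := log_nonneg hM
  have hba : b ≤ a := log_le_log (by linarith) (by linarith)
  have htangent : 1 + log K ≤ L - b + 2 * M * K / N := by
    have := log_le_log_add_div_sub_one hK (show 0 < N / 2 / M by positivity)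
    rw [log_div (by positivity) (by positivity), ← hLdef] at this
    field_simp at this ⊢
    linarith
  have hsos : N * L + N / M - 4 * K - (N - 2 * K) * (L - b + 2 * M * K / N)
      = ((2 * M * K - N) ^ 2 + b * M * N ^ 2 + 2 * K * (a - b) * M * N) / (M * N) := by
    rw [show L = M + a by rw [hMdef]; ring]
    field_simp
    ring
  have hrem : 0 ≤ N * L + N / M - 4 * K - (N - 2 * K) * (L - b + 2 * M * K / N) := by
    rw [hsos]
    have : 0 ≤ 2 * K * (a - b) * M * N := by
      have := sub_nonneg.2 hba
      positivity
    positivity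
  nlinarith [mul_le_mul_of_nonneg_left htangent (sub_nonneg.2 hKN)]

lemma two_fifths_le_log_three_halves : (2 : ℝ) / 5 ≤ log (3 / 2) := by
  rw [le_log_iff_exp_le (by norm_num)]
  have hpow : exp (2 / 5) ^ 5 = exp 1 ^ 2 := by
    rw [← exp_nat_mul, ← exp_nat_mul]; norm_num
  have he : exp 1 ^ 2 < (3 / 2 : ℝ) ^ 5 := by
    nlinarith [exp_one_lt_d9, exp_pos 1]
  exact (lt_of_pow_lt_pow_left₀ 5 (by norm_num) (hpow ▸ he)).le

lemma one_le_add_one_div_sub_log {L : ℝ} (hL : exp (-1) ≤ L) : 1 ≤ L + 1 / (L - log L) := by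
  have hL0 : 0 < L := (exp_pos _).trans_le hL
  have hlog : -1 ≤ log L := by rwa [le_log_iff_exp_le hL0]
  have hM : 0 < L - log L := by linarith [log_le_sub_one_of_pos hL0]
  have h1 : 1 / (L + 1) ≤ 1 / (L - log L) := one_div_le_one_div_of_le hM (by linarith)
  have h2 : 1 - L ≤ 1 / (L + 1) := by
    rw [le_div_iff₀ (by linarith)]
    nlinarith
  linarith

lemma le_swapBound {N : ℝ} (hN : 3 ≤ N) : N ≤ swapBound N := by
  have hL : exp (-1) ≤ log (N / 2) := calc
    exp (-1) ≤ 2 / 5 := by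
      rw [exp_neg, inv_le_comm₀ (exp_pos 1) (by norm_num)]
      linarith [exp_one_gt_d9]
    _ ≤ log (3 / 2) := two_fifths_le_log_three_halves
    _ ≤ log (N / 2) := log_le_log (by norm_num) (by linarith)
  calc N = N * 1 := (mul_one N).symm
    _ ≤ N * (log (N / 2) + 1 / (log (N / 2) - log (log (N / 2)))) := by
        gcongr
        exact one_le_add_one_div_sub_log hL
    _ = swapBound N := by unfold swapBound; ring

lemma sum_one_div_eprob_le_of_le_five {n k : ℕ} {j : ℝ} (hn : n ≤ 5) (hj : 0 ≤ j)
    (hkj : (n : ℝ) - 2 * j = 2 * k) : ∑ r ∈ range k, 1 / eprob (j + (r + 1)) j ≤ n := by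
  have hk : 2 * k ≤ n := by exact_mod_cast (by linarith : (2 * k : ℝ) ≤ n)
  obtain rfl : j = (n - 2 * k) / 2 := by linarith
  have hk2 : k ≤ 2 := by omega
  interval_cases n <;> interval_cases k <;> first | omega | norm_num [sum_range_succ, eprob]

/-- **Uniform upper bound on the mean number of SWAP tests.** For any integer `n ≥ 3` and
any real `j` with `2j` a nonnegative integer, `n - 2j = 2k` a nonnegative even integer,
and `j ≤ n/2 - 1`, one has
`T_*(j) = ∑_{j'=j+1}^{n/2} 1/e_{j'}(j) ≤ n·ln(n/2) + n/(ln(n/2) - ln(ln(n/2)))`. -/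
theorem mean_swap_tests_max_bound
    (n : ℕ) (hn : 3 ≤ n) (j : ℝ) (h2j : ∃ m : ℕ, (m : ℝ) = 2 * j)
    (k : ℕ) (hkj : (n : ℝ) - 2 * j = 2 * k) (hjle : j ≤ (n : ℝ) / 2 - 1) :
    ∑ r ∈ Finset.range k, 1 / eprob (j + (r + 1)) j ≤
      n * Real.log ((n : ℝ) / 2)
        + n / (Real.log ((n : ℝ) / 2) - Real.log (Real.log ((n : ℝ) / 2))) := by
  obtain ⟨m, hm⟩ := h2j
  have hj : 0 ≤ j := by linarith [(Nat.cast_nonneg m : (0 : ℝ) ≤ m)]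
  change _ ≤ swapBound n
  by_cases hn5 : n ≤ 5
  · exact (sum_one_div_eprob_le_of_le_five hn5 hj hkj).trans (le_swapBound (by exact_mod_cast hn))
  have hL : 1 ≤ log ((n : ℝ) / 2) := by
    have : (6 : ℝ) ≤ n := by exact_mod_cast (by omega : 6 ≤ n)
    rw [le_log_iff_exp_le (by positivity)]
    linarith [exp_one_lt_d9]
  calc _ ≤ 4 * k + 2 * j * (1 + log k) := sum_one_div_eprob_le hj k
    _ = 4 * k + (n - 2 * k) * (1 + log k) := by rw [show 2 * j = (n : ℝ) - 2 * k by linarith]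
    _ ≤ swapBound n :=
        four_mul_add_mul_one_add_log_le_swapBound hL (by linarith) (by linarith)
end

section
/- Let n be a positive integer and j a real number with 2j an integer, j > 1, and n − 2j a positive even integer. Then the minimum of e_{j'}(j) over j' ∈ {j+1, j+2, …, n/2} equals 1/(2j+1), and it is attained at j' = j + 1. -/
/-! Writing `a = 2j` and `j' = j + t`, the inequality `1/(a+1) ≤ e_{j+t}(j)` cleared of
denominators reads `(t - 1) * ((a - 3) * t + a * (a - 1)) ≥ 0`. It is an equality at `t = 1`,
and for `t ≥ 1` it holds as soon as `a ≥ 3`, which for half-integral `j > 1` is automatic. -/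

lemma eprob_add_one_self {j : ℝ} (hj : 0 < 2 * j + 1) : eprob (j + 1) j = 1 / (2 * j + 1) := by
  have hden : 2 * (j + 1) * (2 * (j + 1) - 1) ≠ 0 := by
    have : 0 < j + 1 := by linarith
    have : 0 < 2 * (j + 1) - 1 := by linarith
    positivity
  rw [eprob, div_eq_div_iff hden hj.ne']
  ring

lemma one_div_le_eprob_add_self {j t : ℝ} (hj : 3 ≤ 2 * j) (ht : 1 ≤ t) :
    1 / (2 * j + 1) ≤ eprob (j + t) j := by
  have hcleared : 0 ≤ (t - 1) * ((2 * j - 3) * t + 2 * j * (2 * j - 1)) := by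
    apply mul_nonneg <;> nlinarith
  rw [eprob, div_le_div_iff₀ (by linarith) (by nlinarith)]
  nlinarith [hcleared]

theorem min_eprob_j_gt_one_general
    (j : ℝ) (h2j : ∃ m : ℕ, (m : ℝ) = 2 * j) (hj : 1 < j)
    (k : ℕ) (hk : 0 < k) :
    IsLeast (Set.range fun r : Fin k => eprob (j + ((r : ℝ) + 1)) j) (1 / (2 * j + 1))
      ∧ eprob (j + 1) j = 1 / (2 * j + 1) := by
  obtain ⟨m, hm⟩ := h2j
  have h3 : (3 : ℝ) ≤ 2 * j := by
    have : 2 < m := by exact_mod_cast (show (2 : ℝ) < m by linarith)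
    rw [← hm]
    exact_mod_cast this
  have hbase := eprob_add_one_self (j := j) (by linarith)
  refine ⟨⟨⟨⟨0, hk⟩, by simpa using hbase⟩, ?_⟩, hbase⟩
  rintro _ ⟨r, rfl⟩
  exact one_div_le_eprob_add_self h3 (by linarith [(r : ℕ).cast_nonneg (α := ℝ)])

/-- **Minimum singlet-detection probability, case `j > 1`.** If `n` is a positive integer
and `j` a real number with `2j` an integer, `j > 1`, and `n - 2j = 2k` a positive even
integer, then the minimum of `e_{j'}(j)` over `j' ∈ {j+1, j+2, …, n/2}` equals
`1/(2j+1)`, attained at `j' = j + 1`. -/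
theorem min_eprob_j_gt_one
    (n : ℕ) (hn : 0 < n) (j : ℝ) (h2j : ∃ m : ℕ, (m : ℝ) = 2 * j) (hj : 1 < j)
    (k : ℕ) (hk : 0 < k) (hkj : (n : ℝ) - 2 * j = 2 * k) :
    IsLeast (Set.range fun r : Fin k => eprob (j + ((r : ℝ) + 1)) j) (1 / (2 * j + 1))
      ∧ eprob (j + 1) j = 1 / (2 * j + 1) :=
  min_eprob_j_gt_one_general j h2j hj k hk
end

section
/- Let n ≥ 2 be an integer. Then the minimum of p_*(j), taken over all real j such that 2j is a nonnegative integer with n − 2j a positive even integer (i.e., j ∈ {0 or 1/2, …, n/2 − 1} in steps of 1), equals 1/(n−1); it is attained at j = n/2 − 1 (with the inner minimum attained at j' = n/2). -/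
/-- **Overall minimum singlet-detection probability.** For an integer `n ≥ 2`, the
minimum of `p_*(j) = min_{j' ∈ {j+1, …, n/2}} e_{j'}(j)` over all real `j` such that `2j`
is a nonnegative integer with `n - 2j = 2k` a positive even integer, equals `1/(n-1)`;
it is attained at `j = n/2 - 1`, with the inner minimum attained at `j' = n/2`.
(The first conjunct says `1/(n-1)` is a lower bound on every `e_{j'}(j)`; the second says
the value is attained at `j = n/2 - 1`, `j' = n/2`.) -/
theorem min_pstar
    (n : ℕ) (hn : 2 ≤ n) :
    (∀ j : ℝ, (∃ m : ℕ, (m : ℝ) = 2 * j) →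
      ∀ k : ℕ, 0 < k → (n : ℝ) - 2 * j = 2 * k →
        ∀ i : Fin k, 1 / ((n : ℝ) - 1) ≤ eprob (j + ((i : ℝ) + 1)) j)
    ∧ eprob ((n : ℝ) / 2) ((n : ℝ) / 2 - 1) = 1 / ((n : ℝ) - 1) := by
  constructor
  · rintro j ⟨m, hm⟩ k hk hnk i
    have hj : 0 ≤ j := by
      have : (0:ℝ) ≤ (m:ℝ) := Nat.cast_nonneg m
      linarith
    set t : ℝ := (i : ℝ) + 1 with ht
    have ht1 : (1:ℝ) ≤ t := by
      have : (0:ℝ) ≤ (i:ℝ) := Nat.cast_nonneg _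
      linarith
    have htk : t ≤ (k:ℝ) := by
      have : (i:ℕ) < k := i.isLt
      have : ((i:ℕ):ℝ) + 1 ≤ (k:ℝ) := by exact_mod_cast this
      linarith
    have hk1 : (1:ℝ) ≤ (k:ℝ) := by exact_mod_cast hk
    have hn1 : (0:ℝ) < (n:ℝ) - 1 := by linarith
    have hB : (0:ℝ) < 2 * (j + t) * (2 * (j + t) - 1) := by nlinarith
    unfold eprob
    rw [div_le_div_iff₀ hn1 hB]
    have hn' : (n:ℝ) = 2*j + 2*(k:ℝ) := by linarith
    rw [hn']
    nlinarith [mul_nonneg (mul_nonneg (by linarith : (0:ℝ) ≤ 2*j + 2*t - 1) (by linarith : (0:ℝ) ≤ t - 1)) (by linarith : (0:ℝ) ≤ j + t),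
      mul_nonneg (mul_nonneg (by linarith : (0:ℝ) ≤ t) (by linarith : (0:ℝ) ≤ 2*j + t + 1)) (by linarith : (0:ℝ) ≤ (k:ℝ) - t)]
  · have hn1 : ((n:ℝ)) - 1 ≠ 0 := by
      have : (2:ℝ) ≤ (n:ℝ) := by exact_mod_cast hn
      linarith
    have hn0 : ((n:ℝ)) ≠ 0 := by
      have : (2:ℝ) ≤ (n:ℝ) := by exact_mod_cast hn
      linarith
    unfold eprob
    field_simp
    ring
end

section
/- Let n ≥ 20 be an integer and ε ∈ (0,1]. Then for every real j such that 2j is a nonnegative integer with n − 2j a positive even integer (so 0 ≤ j ≤ n/2 − 1), one has T_*(j) + (2/p_*(j))·ln(1/ε) − 1 ≤ 2n·ln(n/ε) − 1. -/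
lemma eprob_ge (j r n : ℝ) (hj : 0 ≤ j) (hr : 1 ≤ r) (hn : 2*j + 2*r ≤ n) :
    1/n ≤ eprob (j + r) j := by
  have hnpos : (0:ℝ) < n := by linarith
  have hD : (0:ℝ) < 2 * (j+r) * (2 * (j+r) - 1) := by nlinarith
  rw [eprob, div_le_div_iff₀ hnpos hD]
  nlinarith [mul_nonneg (mul_nonneg hj (sub_nonneg.2 hr)) (sub_nonneg.2 hr),
    sq_nonneg (r-1), mul_nonneg hj (sq_nonneg (r-1)),
    mul_nonneg (sub_nonneg.2 hn) (by nlinarith : (0:ℝ) ≤ (j+r)*((j+r)+1) - j*(j+1))]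

lemma eprob_inv_le (j r n : ℝ) (hj : 0 ≤ j) (hr : 1 ≤ r) (hn : 2*j + 2*r ≤ n) :
    1 / eprob (j + r) j ≤ 2*n/(r+1) := by
  have hnpos : (0:ℝ) < n := by linarith
  have hD : (0:ℝ) < 2 * (j+r) * (2 * (j+r) - 1) := by nlinarith
  have hN : (0:ℝ) < (j+r)*((j+r)+1) - j*(j+1) := by nlinarith
  rw [eprob, one_div_div, div_le_div_iff₀ hN (by linarith)]
  nlinarith [mul_nonneg (mul_nonneg hj (sub_nonneg.2 hr)) hnpos.le,
    mul_nonneg (sub_nonneg.2 hn) (by nlinarith : (0:ℝ) ≤ (r+1)*(2*j+2*r-1))]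

/-- For an integer `n ≥ 20`, `ε ∈ (0,1]`, and any real `j` with `2j` a nonnegative
integer and `n - 2j = 2k` a positive even integer, with
`T_*(j) = ∑_{j'=j+1}^{n/2} 1/e_{j'}(j)` and `p_*(j) = min_{j' ∈ {j+1,…,n/2}} e_{j'}(j)`,
one has `T_*(j) + (2/p_*(j))·ln(1/ε) - 1 ≤ 2n·ln(n/ε) - 1`. -/
theorem number_of_swap_tests_bound
    (n : ℕ) (hn : 20 ≤ n) (ε : ℝ) (hε : ε ∈ Set.Ioc (0 : ℝ) 1)
    (j : ℝ) (h2j : ∃ m : ℕ, (m : ℝ) = 2 * j)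
    (k : ℕ) (hk : 0 < k) (hkj : (n : ℝ) - 2 * j = 2 * k)
    (pstar : ℝ)
    (hpstar : IsLeast (Set.range fun i : Fin k => eprob (j + ((i : ℝ) + 1)) j) pstar) :
    (∑ r ∈ Finset.range k, 1 / eprob (j + (r + 1)) j)
        + 2 / pstar * Real.log (1 / ε) - 1 ≤ 2 * n * Real.log ((n : ℝ) / ε) - 1 := by
  obtain ⟨hε0, hε1⟩ := hε
  have hj : 0 ≤ j := by
    obtain ⟨m, hm⟩ := h2j
    have : (0:ℝ) ≤ 2 * j := hm ▸ m.cast_nonneg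
    linarith
  have hnr : (20:ℝ) ≤ (n:ℝ) := by exact_mod_cast hn
  have hnpos : (0:ℝ) < n := by linarith
  -- bound on pstar
  have hps : 1/(n:ℝ) ≤ pstar := by
    obtain ⟨i, hi⟩ := hpstar.1
    rw [← hi]
    refine eprob_ge j ((i:ℝ)+1) n hj (by have := Nat.cast_nonneg (α := ℝ) (i:ℕ); linarith) ?_
    have : (i:ℝ) + 1 ≤ k := by exact_mod_cast i.2
    linarith
  have hpspos : 0 < pstar := lt_of_lt_of_le (by positivity) hps
  have hinv : 2 / pstar ≤ 2 * n := by
    rw [div_le_iff₀ hpspos]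
    calc (2:ℝ) = 2 * n * (1/n) := by field_simp
    _ ≤ 2 * n * pstar := by nlinarith
  -- bound on the sum
  have hsum : (∑ r ∈ Finset.range k, 1 / eprob (j + ((r:ℝ) + 1)) j)
      ≤ 2 * n * Real.log ((k:ℝ) + 1) := by
    have tele : (∑ r ∈ Finset.range k,
        (2 * (n:ℝ) * Real.log ((r:ℝ)+2) - 2 * n * Real.log ((r:ℝ)+1)))
        = 2 * n * Real.log ((k:ℝ)+1) - 2 * n * Real.log 1 := by
      have := Finset.sum_range_sub (fun i : ℕ => 2 * (n:ℝ) * Real.log ((i:ℝ)+1)) k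
      simpa [Nat.cast_add, add_assoc, one_add_one_eq_two] using this
    rw [Real.log_one, mul_zero, sub_zero] at tele
    rw [← tele]
    apply Finset.sum_le_sum
    intro r hr
    have hr1 : (1:ℝ) ≤ (r:ℝ) + 1 := by have := Nat.cast_nonneg (α := ℝ) r; linarith
    have hrn : 2*j + 2*((r:ℝ)+1) ≤ n := by
      have : (r:ℝ) + 1 ≤ k := by exact_mod_cast Finset.mem_range.1 hr
      linarith
    calc 1 / eprob (j + ((r:ℝ) + 1)) j ≤ 2*n/((r:ℝ)+1+1) :=
          eprob_inv_le j ((r:ℝ)+1) n hj hr1 hrn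
      _ ≤ 2 * n * Real.log ((r:ℝ)+2) - 2 * n * Real.log ((r:ℝ)+1) := by
          rw [← mul_sub, ← Real.log_div (by positivity) (by positivity)]
          have hlog : 1 - ((r:ℝ)+1)/((r:ℝ)+2) ≤ Real.log (((r:ℝ)+2)/((r:ℝ)+1)) := by
            have h := Real.log_le_sub_one_of_pos
              (x := ((r:ℝ)+1)/((r:ℝ)+2)) (by positivity)
            rw [Real.log_div (by positivity) (by positivity)] at h ⊢
            linarith
          have h1 : 1 - ((r:ℝ)+1)/((r:ℝ)+2) = 1/((r:ℝ)+2) := by field_simp; ring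
          rw [h1] at hlog
          have : 2*n/((r:ℝ)+1+1) = 2*n * (1/((r:ℝ)+2)) := by ring
          rw [this]
          nlinarith
  -- assemble
  have hk1 : Real.log ((k:ℝ)+1) ≤ Real.log n := by
    apply Real.log_le_log (by positivity)
    have : 2*(k:ℝ) ≤ n := by linarith
    linarith
  have hL : 0 ≤ Real.log (1/ε) := Real.log_nonneg (by
    rw [le_div_iff₀ hε0]; linarith)
  have hsplit : Real.log ((n:ℝ)/ε) = Real.log n + Real.log (1/ε) := by
    rw [Real.log_div (by positivity) (ne_of_gt hε0), Real.log_div one_ne_zero (ne_of_gt hε0),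
      Real.log_one]
    ring
  have h2 : 2 / pstar * Real.log (1/ε) ≤ 2 * n * Real.log (1/ε) :=
    mul_le_mul_of_nonneg_right hinv hL
  have h3 : 2 * (n:ℝ) * Real.log ((k:ℝ)+1) ≤ 2 * n * Real.log n := by nlinarith
  rw [hsplit]
  nlinarith [hsum, h2, h3]
end

section
/- Let n ≥ 6 be an integer. Then for every real x with 0 ≤ x < n/2, one has 2n − 2x + 2x·ln(n/2 − x) ≤ n·ln(n/2) + n/(ln(n/2) − ln(ln(n/2))). -/
/-- Auxiliary polynomial inequality: the quadratic upper bound. -/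
lemma max_bound_aux (m x u lu d : ℝ) (hm : 0 < m) (hu : 0 < u)
    (hlu : 0 ≤ lu) (hd0 : 0 ≤ d) (hd4 : d ≤ 4) :
    2*m + 2*(m-x) + 2*x*((m-x)*u/m - 1 + (u + d)) ≤ 2*m*(u + lu + d) + 2*(m/u) := by
  rw [← sub_nonneg]
  have hiden : (2*m*(u + lu + d) + 2*(m/u)
      - (2*m + 2*(m-x) + 2*x*((m-x)*u/m - 1 + (u + d)))) * (m*u)
      = (2*u*(m-x) - (2-d)*m)^2/2 + 2*m^2*u*lu + m^2*d*(2-d/2) := by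
    field_simp
    ring
  have hmu : 0 < m * u := mul_pos hm hu
  have hnn : 0 ≤ (2*u*(m-x) - (2-d)*m)^2/2 + 2*m^2*u*lu + m^2*d*(2-d/2) := by
    have h1 : 0 ≤ (2*u*(m-x) - (2-d)*m)^2/2 := by positivity
    have h2 : 0 ≤ 2*m^2*u*lu := by positivity
    have h3 : 0 ≤ m^2*d*(2-d/2) :=
      mul_nonneg (mul_nonneg (sq_nonneg m) hd0) (by linarith)
    linarith
  nlinarith [hiden, hmu, hnn]

/-- For every integer `n ≥ 6` and every real `x` with `0 ≤ x < n/2`, one has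
`2n - 2x + 2x·ln(n/2 - x) ≤ n·ln(n/2) + n/(ln(n/2) - ln(ln(n/2)))`. -/
theorem max_bound_real
    (n : ℕ) (hn : 6 ≤ n) (x : ℝ) (hx0 : 0 ≤ x) (hxn : x < (n : ℝ) / 2) :
    2 * (n : ℝ) - 2 * x + 2 * x * Real.log ((n : ℝ) / 2 - x) ≤
      n * Real.log ((n : ℝ) / 2)
        + n / (Real.log ((n : ℝ) / 2) - Real.log (Real.log ((n : ℝ) / 2))) := by
  have hn6 : (6:ℝ) ≤ (n:ℝ) := by exact_mod_cast hn
  set m : ℝ := (n:ℝ)/2 with hm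
  have hm3 : (3:ℝ) ≤ m := by rw [hm]; linarith
  have hm0 : (0:ℝ) < m := by linarith
  set L : ℝ := Real.log m with hL
  have hL1 : 1 < L := by
    have h3 : Real.exp 1 < 3 := by have := Real.exp_one_lt_d9; linarith
    rw [hL, ← Real.exp_lt_exp (x := 1), Real.exp_log hm0]
    linarith
  have hL0 : (0:ℝ) < L := by linarith
  set l : ℝ := Real.log L with hl
  have hl0 : 0 < l := Real.log_pos hL1
  -- l ≤ L/2 via sqrt
  have hlhalf : l ≤ L/2 := by
    have hs0 : 0 < Real.sqrt L := Real.sqrt_pos.mpr hL0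
    have hs2 : (Real.sqrt L)^2 = L := Real.sq_sqrt hL0.le
    have h1 : Real.log (Real.sqrt L) ≤ Real.sqrt L - 1 :=
      Real.log_le_sub_one_of_pos hs0
    have h2 : Real.log (Real.sqrt L) = l/2 := by rw [Real.log_sqrt hL0.le, hl]
    nlinarith [sq_nonneg (Real.sqrt L - 2)]
  set u : ℝ := L - l with hu
  have hu1 : 1 ≤ u := by
    have := Real.log_le_sub_one_of_pos hL0
    rw [hu, hl]; linarith
  have hu0 : (0:ℝ) < u := by linarith
  set lu : ℝ := Real.log u with hlu
  have hlu0 : 0 ≤ lu := Real.log_nonneg hu1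
  set d : ℝ := l - lu with hd
  have hd0 : 0 ≤ d := by
    have : lu ≤ l := by
      rw [hlu, hl]
      exact Real.log_le_log hu0 (by rw [hu]; linarith)
    rw [hd]; linarith
  have hd4 : d ≤ 4 := by
    have hhalf : L/2 ≤ u := by rw [hu]; linarith
    have h1 : Real.log (L/2) ≤ lu := by
      rw [hlu]; exact Real.log_le_log (by linarith) hhalf
    have h2 : Real.log (L/2) = l - Real.log 2 := by
      rw [Real.log_div hL0.ne' (by norm_num), hl]
    have h3 : Real.log 2 < 1 := by
      have := Real.log_two_lt_d9; linarith
    rw [hd]; linarith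
  -- tangent line bound for the logarithm
  have ht0 : (0:ℝ) < m - x := by linarith
  have hlogt : Real.log (m - x) ≤ (m-x)*u/m - 1 + (L - lu) := by
    have hc0 : (0:ℝ) < m/u := div_pos hm0 hu0
    have h1 : Real.log ((m-x) / (m/u)) ≤ (m-x)/(m/u) - 1 :=
      Real.log_le_sub_one_of_pos (div_pos ht0 hc0)
    rw [Real.log_div ht0.ne' hc0.ne', Real.log_div hm0.ne' hu0.ne',
      div_div_eq_mul_div] at h1
    rw [← hL, ← hlu] at h1
    linarith
  have hmul : 2 * x * Real.log (m - x) ≤ 2 * x * ((m-x)*u/m - 1 + (L - lu)) :=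
    mul_le_mul_of_nonneg_left hlogt (by linarith)
  have key := max_bound_aux m x u lu d hm0 hu0 hlu0 hd0 hd4
  have hud : u + d = L - lu := by rw [hu, hd]; ring
  have hL' : u + lu + d = L := by rw [hu, hd]; ring
  rw [hud, hL'] at key
  have hn2 : (n:ℝ) = 2*m := by rw [hm]; ring
  rw [hn2]
  have hdiv : 2*m/u = 2*(m/u) := by ring
  linarith [hmul, key]
end
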